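/- arXiv:math/0305312 — 8 statements merged into one kernel-verified Lean document; each statement's English description precedes it below -/
import Mathlib

section
/- Let W be a 3-dimensional complex vector space and let γ be a nonzero complex alternating 3-form on W (i.e. ℂ-trilinear and alternating). Then the real alternating 3-forms Re∘γ and Im∘γ on the underlying 6-dimensional real vector space of W are both multisymplectic. -/
open scoped TensorProduct

/-- The wedge product of real-valued alternating forms
(antisymmetrized shuffle-sum convention, via `AlternatingMap.domCoprod`). -/
noncomputable def wedge {V : Type*} [AddCommGroup V] [Module ℝ V] {p q : ℕ}
    (α : V [⋀^Fin p]→ₗ[ℝ] ℝ) (β : V [⋀^Fin q]→ₗ[ℝ] ℝ) : V [⋀^Fin (p + q)]→ₗ[ℝ] ℝ :=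
  ((LinearMap.mul' ℝ ℝ).compAlternatingMap (α.domCoprod β)).domDomCongr finSumFinEquiv

/-- The interior product `ι_v ω = ω(v, ·, …, ·)`. -/
noncomputable def iota {V : Type*} [AddCommGroup V] [Module ℝ V] {n : ℕ}
    (v : V) (ω : V [⋀^Fin (n + 1)]→ₗ[ℝ] ℝ) : V [⋀^Fin n]→ₗ[ℝ] ℝ :=
  ω.curryLeft v

/-- `Δ(ω) = {v ∈ V : (ι_v ω) ∧ (ι_v ω) = 0}` for a 3-form `ω`. -/
noncomputable def Delta {V : Type*} [AddCommGroup V] [Module ℝ V]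
    (ω : V [⋀^Fin 3]→ₗ[ℝ] ℝ) : Set V :=
  {v | wedge (iota v ω) (iota v ω) = 0}

/-- A form is multisymplectic iff `v ↦ ι_v ω` is injective. -/
noncomputable def Multisymplectic {V : Type*} [AddCommGroup V] [Module ℝ V] {n : ℕ}
    (ω : V [⋀^Fin (n + 1)]→ₗ[ℝ] ℝ) : Prop :=
  Function.Injective fun v : V => iota v ω

/-- A complex alternating 3-form, viewed as a real alternating 3-form with complex values
on the underlying real vector space. -/
noncomputable def restrictC {W : Type*} [AddCommGroup W] [Module ℝ W] [Module ℂ W]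
    [IsScalarTower ℝ ℂ W] (γ : W [⋀^Fin 3]→ₗ[ℂ] ℂ) : W [⋀^Fin 3]→ₗ[ℝ] ℂ :=
  { γ.toMultilinearMap.restrictScalars ℝ with
    map_eq_zero_of_eq' := fun v i j h hij => γ.map_eq_zero_of_eq v h hij }

/-- `Re ∘ γ` as a real alternating 3-form on the underlying real vector space. -/
noncomputable def reForm {W : Type*} [AddCommGroup W] [Module ℝ W] [Module ℂ W]
    [IsScalarTower ℝ ℂ W] (γ : W [⋀^Fin 3]→ₗ[ℂ] ℂ) : W [⋀^Fin 3]→ₗ[ℝ] ℝ :=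
  Complex.reLm.compAlternatingMap (restrictC γ)

/-- `Im ∘ γ` as a real alternating 3-form on the underlying real vector space. -/
noncomputable def imForm {W : Type*} [AddCommGroup W] [Module ℝ W] [Module ℂ W]
    [IsScalarTower ℝ ℂ W] (γ : W [⋀^Fin 3]→ₗ[ℂ] ℂ) : W [⋀^Fin 3]→ₗ[ℝ] ℝ :=
  Complex.imLm.compAlternatingMap (restrictC γ)

/-!
A top-degree form `f` on an `(n+1)`-dimensional space equals `f b • det_b` for any basis `b`, so if
`f ≠ 0` it is nonzero on every basis; a basis whose first vector is a given `v ≠ 0` then shows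
`ι_v f ≠ 0`. Applied to `γ`, this gives `ι_v γ ≠ 0`, and since `ι_v γ` is `ℂ`-linear in each slot,
`γ(v, i • x, y) = i • γ(v, x, y)` shows that neither its real nor its imaginary part can vanish
identically.
-/

open Module

theorem Module.Basis.exists_fin_zero_eq {K V : Type*} [DivisionRing K] [AddCommGroup V]
    [Module K V] {n : ℕ} (hV : finrank K V = n + 1) {v : V} (hv : v ≠ 0) :
    ∃ b : Basis (Fin (n + 1)) K V, b 0 = v := by
  have : Module.Finite K V := Module.finite_of_finrank_eq_succ hV
  have hli : LinearIndepOn K id ({v} : Set V) := .singleton hv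
  let s := hli.extend (Set.subset_univ _)
  let b : Basis s K V := Basis.extend hli
  have : Fintype s := FiniteDimensional.fintypeBasisIndex b
  let e : s ≃ Fin (n + 1) := Fintype.equivFinOfCardEq (by rw [← finrank_eq_card_basis b, hV])
  let v' : s := ⟨v, hli.subset_extend _ rfl⟩
  refine ⟨b.reindex (e.trans (Equiv.swap (e v') 0)), ?_⟩
  simp only [Basis.reindex_apply, Equiv.symm_trans_apply, Equiv.symm_swap, Equiv.swap_apply_right,
    Equiv.symm_apply_apply]
  exact Basis.extend_apply_self hli v'

theorem AlternatingMap.eq_zero_of_curryLeft_eq_zero {K V : Type*} [Field K] [AddCommGroup V]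
    [Module K V] {n : ℕ} (hV : finrank K V = n + 1) {f : V [⋀^Fin (n + 1)]→ₗ[K] K} (hf : f ≠ 0)
    {v : V} (hfv : f.curryLeft v = 0) : v = 0 := by
  by_contra hv
  obtain ⟨b, hb⟩ := Basis.exists_fin_zero_eq hV hv
  have hfb : f b ≠ 0 := fun h ↦ hf (by rw [f.eq_smul_basis_det b, h, zero_smul])
  have hfb_eq : f b = f.curryLeft v (Fin.tail b) := by
    rw [curryLeft_apply_apply, ← hb, Matrix.vecCons, Fin.cons_self_tail]
  exact hfb (by rw [hfb_eq, hfv]; rfl)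

theorem LinearMap.eq_zero_of_forall_re_eq_zero {W : Type*} [AddCommGroup W] [Module ℂ W]
    {φ : W →ₗ[ℂ] ℂ} (h : ∀ x, (φ x).re = 0) : φ = 0 := by
  ext x
  refine Complex.ext (h x) ?_
  simpa using h (Complex.I • x)

section

variable {W ι : Type*} [AddCommGroup W] [Module ℂ W] [Nonempty ι]

theorem AlternatingMap.eq_zero_of_forall_re_eq_zero {f : W [⋀^ι]→ₗ[ℂ] ℂ}
    (h : ∀ m, (f m).re = 0) : f = 0 := by
  classical
  ext m
  let i : ι := Classical.arbitrary ι
  have hφ : f.toMultilinearMap.toLinearMap m i = 0 :=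
    LinearMap.eq_zero_of_forall_re_eq_zero fun x ↦ h _
  simpa using LinearMap.congr_fun hφ (m i)

theorem AlternatingMap.eq_zero_of_forall_im_eq_zero {f : W [⋀^ι]→ₗ[ℂ] ℂ}
    (h : ∀ m, (f m).im = 0) : f = 0 := by
  have hIf : Complex.I • f = 0 := eq_zero_of_forall_re_eq_zero fun m ↦ by simp [h m]
  simpa [Complex.I_ne_zero] using hIf

end

theorem multisymplectic_iff {V : Type*} [AddCommGroup V] [Module ℝ V] {n : ℕ}
    {ω : V [⋀^Fin (n + 1)]→ₗ[ℝ] ℝ} : Multisymplectic ω ↔ ∀ v, iota v ω = 0 → v = 0 :=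
  injective_iff_map_eq_zero ω.curryLeft

section

variable {W : Type*} [AddCommGroup W] [Module ℝ W] [Module ℂ W] [IsScalarTower ℝ ℂ W]

theorem multisymplectic_reForm (hW : finrank ℂ W = 3) {γ : W [⋀^Fin 3]→ₗ[ℂ] ℂ} (hγ : γ ≠ 0) :
    Multisymplectic (reForm γ) :=
  multisymplectic_iff.2 fun _ hv ↦ γ.eq_zero_of_curryLeft_eq_zero hW hγ <|
    AlternatingMap.eq_zero_of_forall_re_eq_zero fun m ↦ congr($hv m)

theorem multisymplectic_imForm (hW : finrank ℂ W = 3) {γ : W [⋀^Fin 3]→ₗ[ℂ] ℂ} (hγ : γ ≠ 0) :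
    Multisymplectic (imForm γ) :=
  multisymplectic_iff.2 fun _ hv ↦ γ.eq_zero_of_curryLeft_eq_zero hW hγ <|
    AlternatingMap.eq_zero_of_forall_im_eq_zero fun m ↦ congr($hv m)

end

theorem reForm_imForm_multisymplectic_general
    {W : Type*} [AddCommGroup W] [Module ℝ W] [Module ℂ W] [IsScalarTower ℝ ℂ W]
    (hW : Module.finrank ℂ W = 3)
    (γ : W [⋀^Fin 3]→ₗ[ℂ] ℂ) (hγ : γ ≠ 0) :
    Multisymplectic (reForm γ) ∧ Multisymplectic (imForm γ) :=
  ⟨multisymplectic_reForm hW hγ, multisymplectic_imForm hW hγ⟩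

/-- **Lemma 1.** If `γ` is a nonzero complex alternating 3-form on a 3-dimensional complex
vector space `W`, then `Re ∘ γ` and `Im ∘ γ` are multisymplectic real 3-forms on the
underlying 6-dimensional real vector space of `W`. -/
theorem reForm_imForm_multisymplectic
    {W : Type*} [AddCommGroup W] [Module ℝ W] [Module ℂ W] [IsScalarTower ℝ ℂ W]
    [FiniteDimensional ℂ W] (hW : Module.finrank ℂ W = 3)
    (γ : W [⋀^Fin 3]→ₗ[ℂ] ℂ) (hγ : γ ≠ 0) :
    Multisymplectic (reForm γ) ∧ Multisymplectic (imForm γ) :=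
  reForm_imForm_multisymplectic_general hW γ hγ
end

section
/- Let W be a 3-dimensional complex vector space and let γ be a nonzero complex alternating 3-form on W (i.e. ℂ-trilinear and alternating). Then the real alternating 3-forms Re∘γ and Im∘γ on the underlying 6-dimensional real vector space of W are multisymplectic and of type 2, i.e. Δ(Re∘γ) = {0} and Δ(Im∘γ) = {0}. -/
open scoped TensorProduct

open Equiv in
private lemma sum_perm_fin1 (g : Fin 1 → ℝ) :
    ∑ σ : Equiv.Perm (Fin 1), ((Equiv.Perm.sign σ : ℤ) : ℝ) * g (σ 0) = g 0 := by
  rw [Fintype.sum_subsingleton _ (1 : Equiv.Perm (Fin 1))]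
  simp

open Equiv in
private lemma sum_perm_fin2 (g : Fin 2 → Fin 2 → ℝ) :
    ∑ σ : Equiv.Perm (Fin 2), ((Equiv.Perm.sign σ : ℤ) : ℝ) * g (σ 0) (σ 1) = g 0 1 - g 1 0 := by
  rw [← Equiv.sum_comp (Equiv.Perm.decomposeFin.symm)
    (fun σ : Equiv.Perm (Fin 2) => ((Equiv.Perm.sign σ : ℤ) : ℝ) * g (σ 0) (σ 1))]
  rw [Fintype.sum_prod_type]
  have k1 : (1 : Fin 2) = (0 : Fin 1).succ := rfl
  simp only [k1, Equiv.Perm.decomposeFin.symm_sign, Equiv.Perm.decomposeFin_symm_apply_zero,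
    Equiv.Perm.decomposeFin_symm_apply_succ, Units.val_mul, Int.cast_mul, mul_assoc]
  rw [Fin.sum_univ_two]
  simp only [if_pos rfl, if_neg (by decide : (1 : Fin 2) ≠ 0), Units.val_one, Int.cast_one,
    if_true, one_mul, Units.val_neg, Int.cast_neg, neg_mul, Finset.sum_neg_distrib]
  rw [Fintype.sum_subsingleton _ (1 : Equiv.Perm (Fin 1)),
    Fintype.sum_subsingleton _ (1 : Equiv.Perm (Fin 1))]
  norm_num [Equiv.swap_apply_def]
  ring_nf

open Equiv in
private lemma sum_perm_fin3 (g : Fin 3 → Fin 3 → Fin 3 → ℝ) :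
    ∑ σ : Equiv.Perm (Fin 3), ((Equiv.Perm.sign σ : ℤ) : ℝ) * g (σ 0) (σ 1) (σ 2)
      = g 0 1 2 - g 0 2 1 - g 1 0 2 + g 1 2 0 + g 2 0 1 - g 2 1 0 := by
  rw [← Equiv.sum_comp (Equiv.Perm.decomposeFin.symm)
    (fun σ : Equiv.Perm (Fin 3) => ((Equiv.Perm.sign σ : ℤ) : ℝ) * g (σ 0) (σ 1) (σ 2))]
  rw [Fintype.sum_prod_type]
  have k1 : (1 : Fin 3) = (0 : Fin 2).succ := rfl
  have k2 : (2 : Fin 3) = (1 : Fin 2).succ := rfl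
  simp only [k1, k2, Equiv.Perm.decomposeFin.symm_sign, Equiv.Perm.decomposeFin_symm_apply_zero,
    Equiv.Perm.decomposeFin_symm_apply_succ, Units.val_mul, Int.cast_mul, mul_assoc]
  rw [Fin.sum_univ_three]
  simp only [if_pos rfl, if_neg (by decide : (1 : Fin 3) ≠ 0), if_neg (by decide : (2 : Fin 3) ≠ 0),
    if_true, one_mul, Units.val_one, Int.cast_one, Units.val_neg, Int.cast_neg, neg_mul,
    Finset.sum_neg_distrib]
  simp only [sum_perm_fin2 (fun a b => g 0 ((swap 0 0) a.succ) ((swap 0 0) b.succ)),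
    sum_perm_fin2 (fun a b => g 1 ((swap 0 1) a.succ) ((swap 0 1) b.succ)),
    sum_perm_fin2 (fun a b => g 2 ((swap 0 2) a.succ) ((swap 0 2) b.succ))]
  norm_num [Equiv.swap_apply_def, Fin.ext_iff]
  ring_nf

open Equiv in
private lemma sum_perm_fin4 (g : Fin 4 → Fin 4 → Fin 4 → Fin 4 → ℝ) :
    ∑ σ : Equiv.Perm (Fin 4), ((Equiv.Perm.sign σ : ℤ) : ℝ) * g (σ 0) (σ 1) (σ 2) (σ 3)
      = g 0 1 2 3 - g 0 1 3 2 - g 0 2 1 3 + g 0 2 3 1 + g 0 3 1 2 - g 0 3 2 1 - g 1 0 2 3 + g 1 0 3 2 + g 1 2 0 3 - g 1 2 3 0 - g 1 3 0 2 + g 1 3 2 0 + g 2 0 1 3 - g 2 0 3 1 - g 2 1 0 3 + g 2 1 3 0 + g 2 3 0 1 - g 2 3 1 0 - g 3 0 1 2 + g 3 0 2 1 + g 3 1 0 2 - g 3 1 2 0 - g 3 2 0 1 + g 3 2 1 0 := by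
  rw [← Equiv.sum_comp (Equiv.Perm.decomposeFin.symm)
    (fun σ : Equiv.Perm (Fin 4) => ((Equiv.Perm.sign σ : ℤ) : ℝ) * g (σ 0) (σ 1) (σ 2) (σ 3))]
  rw [Fintype.sum_prod_type]
  have k1 : (1 : Fin 4) = (0 : Fin 3).succ := rfl
  have k2 : (2 : Fin 4) = (1 : Fin 3).succ := rfl
  have k3 : (3 : Fin 4) = (2 : Fin 3).succ := rfl
  simp only [k1, k2, k3, Equiv.Perm.decomposeFin.symm_sign, Equiv.Perm.decomposeFin_symm_apply_zero,
    Equiv.Perm.decomposeFin_symm_apply_succ, Units.val_mul, Int.cast_mul, mul_assoc]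
  rw [Fin.sum_univ_four]
  simp only [if_pos rfl, if_neg (by decide : (1 : Fin 4) ≠ 0), if_neg (by decide : (2 : Fin 4) ≠ 0),
    if_neg (by decide : (3 : Fin 4) ≠ 0),
    if_true, one_mul, Units.val_one, Int.cast_one, Units.val_neg, Int.cast_neg, neg_mul,
    Finset.sum_neg_distrib]
  simp only [sum_perm_fin3 (fun a b c => g 0 ((swap 0 0) a.succ) ((swap 0 0) b.succ) ((swap 0 0) c.succ)),
    sum_perm_fin3 (fun a b c => g 1 ((swap 0 1) a.succ) ((swap 0 1) b.succ) ((swap 0 1) c.succ)),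
    sum_perm_fin3 (fun a b c => g 2 ((swap 0 2) a.succ) ((swap 0 2) b.succ) ((swap 0 2) c.succ)),
    sum_perm_fin3 (fun a b c => g 3 ((swap 0 3) a.succ) ((swap 0 3) b.succ) ((swap 0 3) c.succ))]
  have m1 : (0 : Fin 3).succ = 1 := rfl
  have m2 : (1 : Fin 3).succ = 2 := rfl
  have m3 : (2 : Fin 3).succ = 3 := rfl
  simp only [m1, m2, m3]
  norm_num [Equiv.swap_apply_def, Fin.ext_iff, show ((3:Fin 4):ℕ) = 3 from rfl,
    show ((2:Fin 4):ℕ) = 2 from rfl, show ((1:Fin 4):ℕ) = 1 from rfl]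
  ring_nf

private lemma four_smul_wedge_apply {V : Type*} [AddCommGroup V] [Module ℝ V]
    (α β : V [⋀^Fin 2]→ₗ[ℝ] ℝ) (m : Fin 4 → V) :
    (4:ℤ) • wedge α β m
      = ∑ τ : Equiv.Perm (Fin 4), (Equiv.Perm.sign τ : ℤ) •
          (α ![m (τ 0), m (τ 1)] * β ![m (τ 2), m (τ 3)]) := by
  have h4 := MultilinearMap.domCoprod_alternization_eq α β
  have h4' := congrArg (fun F : V [⋀^Fin 2 ⊕ Fin 2]→ₗ[ℝ] (ℝ ⊗[ℝ] ℝ) =>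
    LinearMap.mul' ℝ ℝ (F (m ∘ finSumFinEquiv))) h4
  simp only [Fintype.card_fin, Nat.factorial_two, AlternatingMap.smul_apply,
    map_smul, MultilinearMap.alternatization_apply] at h4'
  rw [map_sum] at h4'
  have hL : ∀ σ : Equiv.Perm (Fin 2 ⊕ Fin 2),
      LinearMap.mul' ℝ ℝ (Equiv.Perm.sign σ •
        (MultilinearMap.domDomCongr σ (MultilinearMap.domCoprod
          (α : MultilinearMap ℝ (fun _ : Fin 2 => V) ℝ)
          (β : MultilinearMap ℝ (fun _ : Fin 2 => V) ℝ))) (m ∘ ⇑finSumFinEquiv))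
        = (Equiv.Perm.sign σ : ℤ) • (α (fun i => m (finSumFinEquiv (σ (Sum.inl i))))
            * β (fun i => m (finSumFinEquiv (σ (Sum.inr i))))) := by
    intro σ
    rw [Units.smul_def, map_zsmul]
    simp [MultilinearMap.domDomCongr_apply, MultilinearMap.domCoprod_apply, Function.comp]
  rw [Finset.sum_congr rfl (fun σ _ => hL σ)] at h4'
  have hwedge : LinearMap.mul' ℝ ℝ ((2 * 2) • (α.domCoprod β) (m ∘ ⇑finSumFinEquiv))
      = (4:ℤ) • wedge α β m := by
    rw [map_nsmul]
    norm_num [wedge]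
  rw [hwedge] at h4'
  rw [← h4']
  refine Fintype.sum_equiv finSumFinEquiv.permCongr _ _ fun σ => ?_
  have hs : Equiv.Perm.sign (finSumFinEquiv.permCongr σ) = Equiv.Perm.sign σ :=
    Equiv.Perm.sign_permCongr finSumFinEquiv σ
  rw [hs]
  congr 1
  congr 1
  · congr 1
    ext i
    fin_cases i <;> simp [Equiv.permCongr_apply] <;> rfl
  · congr 1
    ext i
    fin_cases i <;> simp [Equiv.permCongr_apply] <;> rfl

private lemma wedge_self_apply {V : Type*} [AddCommGroup V] [Module ℝ V]
    (β : V [⋀^Fin 2]→ₗ[ℝ] ℝ) (w1 w2 w3 w4 : V) :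
    wedge β β ![w1, w2, w3, w4] =
      2 * (β ![w1, w2] * β ![w3, w4] - β ![w1, w3] * β ![w2, w4] + β ![w1, w4] * β ![w2, w3]) := by
  have hsw : ∀ a b : V, β ![b, a] = -β ![a, b] := by
    intro a b
    have hab : ![b, a] = ![a, b] ∘ Equiv.swap (0 : Fin 2) 1 := by
      ext i; fin_cases i <;> rfl
    rw [hab, β.map_swap ![a, b] (show (0:Fin 2) ≠ 1 by decide)]
  have h4 := four_smul_wedge_apply β β ![w1, w2, w3, w4]
  simp only [zsmul_eq_mul, Int.cast_ofNat] at h4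
  rw [sum_perm_fin4 (fun a b c d => β ![(![w1, w2, w3, w4]) a, (![w1, w2, w3, w4]) b]
      * β ![(![w1, w2, w3, w4]) c, (![w1, w2, w3, w4]) d])] at h4
  simp only [show (![w1, w2, w3, w4]) 0 = w1 from rfl, show (![w1, w2, w3, w4]) 1 = w2 from rfl,
    show (![w1, w2, w3, w4]) 2 = w3 from rfl, show (![w1, w2, w3, w4]) 3 = w4 from rfl] at h4
  simp only [hsw w1 w2, hsw w1 w3, hsw w1 w4, hsw w2 w3, hsw w2 w4, hsw w3 w4] at h4
  linear_combination h4 / 4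

private lemma vec4_eta {V : Type*} (m : Fin 4 → V) : ![m 0, m 1, m 2, m 3] = m := by
  ext i; fin_cases i <;> rfl

private lemma wedge_zero {V : Type*} [AddCommGroup V] [Module ℝ V] :
    wedge (0 : V [⋀^Fin 2]→ₗ[ℝ] ℝ) (0 : V [⋀^Fin 2]→ₗ[ℝ] ℝ) = (0 : V [⋀^Fin 4]→ₗ[ℝ] ℝ) := by
  apply AlternatingMap.ext
  intro m
  have h := wedge_self_apply (0 : V [⋀^Fin 2]→ₗ[ℝ] ℝ) (m 0) (m 1) (m 2) (m 3)
  rw [vec4_eta m] at h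
  simpa using h

private lemma multisymplectic_of_delta {V : Type*} [AddCommGroup V] [Module ℝ V]
    (ω : V [⋀^Fin 3]→ₗ[ℝ] ℝ) (h : Delta ω = {0}) : Multisymplectic ω := by
  intro v v' hvv
  have h1 : iota (v - v') ω = 0 := by
    simp only [iota, map_sub]
    rw [sub_eq_zero]
    exact hvv
  have h2 : (v - v') ∈ Delta ω := by
    show wedge (iota (v - v') ω) (iota (v - v') ω) = 0
    rw [h1, wedge_zero]
  rw [h] at h2
  exact sub_eq_zero.mp h2

private lemma exists_gamma_ne_zero {W : Type*} [AddCommGroup W] [Module ℂ W]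
    [FiniteDimensional ℂ W] (hW : Module.finrank ℂ W = 3)
    (γ : W [⋀^Fin 3]→ₗ[ℂ] ℂ) (hγ : γ ≠ 0) {v : W} (hv : v ≠ 0) :
    ∃ w w' : W, γ ![v, w, w'] ≠ 0 := by
  obtain ⟨u, hu⟩ : ∃ u : Fin 3 → W, γ u ≠ 0 := by
    by_contra h
    push_neg at h
    exact hγ (AlternatingMap.ext fun u => by simp [h u])
  have hindep : LinearIndependent ℂ u := by
    by_contra h
    exact hu (γ.map_linearDependent u h)
  have hcard : Fintype.card (Fin 3) = Module.finrank ℂ W := by simp [hW]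
  set b := basisOfLinearIndependentOfCardEqFinrank hindep hcard with hbdef
  have hb : ∀ i, b i = u i := fun i => by
    rw [hbdef, coe_basisOfLinearIndependentOfCardEqFinrank]
  obtain ⟨j, hj⟩ : ∃ j, b.repr v j ≠ 0 := by
    by_contra h
    push_neg at h
    exact hv (b.forall_coord_eq_zero_iff.mp fun i => by rw [Module.Basis.coord_apply]; exact h i)
  have hupdate : ∀ (k l : Fin 3) (x : W), Function.update ![v, u k, u l] 0 x = ![x, u k, u l] := by
    intro k l x; ext i; fin_cases i <;> simp [Function.update]
  have hexp : ∀ k l : Fin 3, γ ![v, u k, u l] = ∑ i, b.repr v i • γ ![u i, u k, u l] := by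
    intro k l
    calc γ ![v, u k, u l] = γ (Function.update ![v, u k, u l] 0 (∑ i, b.repr v i • b i)) := by
          rw [b.sum_repr v, hupdate k l v]
      _ = ∑ i, γ (Function.update ![v, u k, u l] 0 (b.repr v i • b i)) := by
          rw [γ.map_update_sum]
      _ = ∑ i, b.repr v i • γ ![u i, u k, u l] := by
          refine Finset.sum_congr rfl fun i _ => ?_
          rw [γ.map_update_smul, hupdate k l (b i), hb i]
  have hzero : ∀ (i k l : Fin 3), i = k ∨ i = l → u k = u k → γ ![u i, u k, u l] = 0 := by
    intro i k l hik _
    rcases hik with rfl | rfl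
    · exact γ.map_eq_zero_of_eq _ (show (![u i, u i, u l]) 0 = (![u i, u i, u l]) 1 from rfl)
        (by decide)
    · exact γ.map_eq_zero_of_eq _ (show (![u i, u k, u i]) 0 = (![u i, u k, u i]) 2 from rfl)
        (by decide)
  fin_cases j
  · refine ⟨u 1, u 2, ?_⟩
    rw [hexp 1 2, Fin.sum_univ_three]
    rw [hzero 1 1 2 (Or.inl rfl) rfl, hzero 2 1 2 (Or.inr rfl) rfl]
    have t0 : γ ![u 0, u 1, u 2] = γ u := by
      congr 1; ext i; fin_cases i <;> rfl
    rw [t0, smul_zero, smul_zero, add_zero, add_zero]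
    exact smul_ne_zero hj hu
  · refine ⟨u 0, u 2, ?_⟩
    rw [hexp 0 2, Fin.sum_univ_three]
    rw [hzero 0 0 2 (Or.inl rfl) rfl, hzero 2 0 2 (Or.inr rfl) rfl]
    have t1 : γ ![u 1, u 0, u 2] = -γ u := by
      have e1 : ![u 1, u 0, u 2] = u ∘ Equiv.swap (0 : Fin 3) 1 := by
        ext i; fin_cases i <;> rfl
      rw [e1, γ.map_swap u (show (0:Fin 3) ≠ 1 by decide)]
    rw [t1, smul_zero, smul_zero, zero_add, add_zero, smul_neg]
    exact neg_ne_zero.mpr (smul_ne_zero hj hu)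
  · refine ⟨u 1, u 0, ?_⟩
    rw [hexp 1 0, Fin.sum_univ_three]
    rw [hzero 0 1 0 (Or.inr rfl) rfl, hzero 1 1 0 (Or.inl rfl) rfl]
    have t2 : γ ![u 2, u 1, u 0] = -γ u := by
      have e2 : ![u 2, u 1, u 0] = u ∘ Equiv.swap (0 : Fin 3) 2 := by
        ext i; fin_cases i <;> rfl
      rw [e2, γ.map_swap u (show (0:Fin 3) ≠ 2 by decide)]
    rw [t2, smul_zero, smul_zero, zero_add, zero_add, smul_neg]
    exact neg_ne_zero.mpr (smul_ne_zero hj hu)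

private lemma delta_phi_eq_singleton {W : Type*} [AddCommGroup W] [Module ℝ W] [Module ℂ W]
    [IsScalarTower ℝ ℂ W] [FiniteDimensional ℂ W] (hW : Module.finrank ℂ W = 3)
    (γ : W [⋀^Fin 3]→ₗ[ℂ] ℂ) (hγ : γ ≠ 0) (φ : ℂ →ₗ[ℝ] ℝ)
    (hφ : ∀ y : ℂ, φ y ^ 2 + φ (Complex.I * y) ^ 2 = Complex.normSq y) :
    Delta (φ.compAlternatingMap (restrictC γ)) = {0} := by
  set ω := φ.compAlternatingMap (restrictC γ) with hω
  ext v
  simp only [Delta, Set.mem_setOf_eq, Set.mem_singleton_iff]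
  constructor
  · intro h
    by_contra hv
    obtain ⟨w, w', hz⟩ := exists_gamma_ne_zero hW γ hγ hv
    have c0 : ∀ a : W, γ ![v, a, a] = 0 := fun a =>
      γ.map_eq_zero_of_eq _ (show (![v, a, a]) 1 = (![v, a, a]) 2 from rfl) (by decide)
    have hupd1 : ∀ (a b x : W), Function.update ![v, a, b] 1 x = ![v, x, b] := by
      intro a b x; ext i; fin_cases i <;> simp [Function.update]
    have hupd2 : ∀ (a b x : W), Function.update ![v, a, b] 2 x = ![v, a, x] := by
      intro a b x; ext i; fin_cases i <;> simp [Function.update]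
    have csm1 : ∀ a b : W, γ ![v, Complex.I • a, b] = Complex.I * γ ![v, a, b] := by
      intro a b
      have h1 := γ.map_update_smul ![v, a, b] 1 Complex.I a
      rw [hupd1 a b (Complex.I • a), hupd1 a b a] at h1
      simpa [smul_eq_mul] using h1
    have csm2 : ∀ a b : W, γ ![v, a, Complex.I • b] = Complex.I * γ ![v, a, b] := by
      intro a b
      have h1 := γ.map_update_smul ![v, a, b] 2 Complex.I b
      rw [hupd2 a b (Complex.I • b), hupd2 a b b] at h1
      simpa [smul_eq_mul] using h1
    have hfun : ∀ a b : W, iota v ω ![a, b] = φ (γ ![v, a, b]) := fun a b => rfl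
    have hQ := wedge_self_apply (iota v ω) w (Complex.I • w) w' (Complex.I • w')
    rw [h] at hQ
    simp only [AlternatingMap.zero_apply] at hQ
    simp only [hfun, csm1, csm2, c0, mul_zero, map_zero, ← mul_assoc, Complex.I_mul_I,
      neg_one_mul, map_neg] at hQ
    have hn := hφ (γ ![v, w, w'])
    have hns : Complex.normSq (γ ![v, w, w']) = 0 := by nlinarith [hQ, hn]
    exact hz (Complex.normSq_eq_zero.mp hns)
  · rintro rfl
    have h0 : iota (0 : W) ω = 0 := by
      simp [iota]
    rw [h0, wedge_zero]

/-- **Corollary 3.** If `γ` is a nonzero complex alternating 3-form on a 3-dimensional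
complex vector space `W`, then `Re ∘ γ` and `Im ∘ γ` are multisymplectic real 3-forms of
type 2 (i.e. `Δ(Re ∘ γ) = {0}` and `Δ(Im ∘ γ) = {0}`) on the underlying 6-dimensional
real vector space of `W`. -/
theorem reForm_imForm_multisymplectic_type2
    {W : Type*} [AddCommGroup W] [Module ℝ W] [Module ℂ W] [IsScalarTower ℝ ℂ W]
    [FiniteDimensional ℂ W] (hW : Module.finrank ℂ W = 3)
    (γ : W [⋀^Fin 3]→ₗ[ℂ] ℂ) (hγ : γ ≠ 0) :
    (Multisymplectic (reForm γ) ∧ Multisymplectic (imForm γ)) ∧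
      (Delta (reForm γ) = {0} ∧ Delta (imForm γ) = {0}) := by
  have hre : Delta (reForm γ) = {0} :=
    delta_phi_eq_singleton hW γ hγ Complex.reLm (by
      intro y
      simp [Complex.normSq_apply, Complex.mul_re]
      ring)
  have him : Delta (imForm γ) = {0} :=
    delta_phi_eq_singleton hW γ hγ Complex.imLm (by
      intro y
      simp [Complex.normSq_apply, Complex.mul_im]
      ring)
  exact ⟨⟨multisymplectic_of_delta _ hre, multisymplectic_of_delta _ him⟩, hre, him⟩
end

section
/- Let V be a 6-dimensional real vector space, ω an alternating 3-form on V, and θ a nonzero alternating 6-form on V. Then there exists a unique linear map Q : V → V such that (ι_vω)∧ω = ι_{Q(v)}θ for all v ∈ V. -/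
/-!
For a nonzero top form `θ` on an `(n + 1)`-dimensional space, `v ↦ ι_v θ` is a linear
isomorphism onto the `n`-forms. In a basis `b`, `ι_w θ` evaluated on the basis vectors other than
`b i` is `± (b.repr w i) θ(b)`, and an `n`-form is determined by these `n + 1` values. Since
`v ↦ (ι_v ω) ∧ ω` is linear, `Q` is this linear map followed by the inverse isomorphism.
-/

open scoped TensorProduct

namespace AlternatingMap

theorem curryLeft_apply_basis_comp_succAbove {R M N : Type*} [CommRing R] [AddCommGroup M]
    [Module R M] [AddCommGroup N] [Module R N] {n : ℕ}
    (f : M [⋀^Fin (n + 1)]→ₗ[R] N) (b : Module.Basis (Fin (n + 1)) R M) (w : M)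
    (i : Fin (n + 1)) :
    f.curryLeft w (b ∘ i.succAbove) = ((-1) ^ (i : ℕ) * b.repr w i) • f b := by
  have hb_self : f.curryLeft (b i) (b ∘ i.succAbove) = (-1 : R) ^ (i : ℕ) • f b := by
    rw [curryLeft_apply_apply, ← neg_one_pow_smul_map_insertNth, ← Int.cast_smul_eq_zsmul R]
    push_cast
    exact congrArg _ (congrArg f (Fin.insertNth_self_removeNth i b))
  have hb_ne (j : Fin (n + 1)) (hj : j ≠ i) : f.curryLeft (b j) (b ∘ i.succAbove) = 0 := by
    obtain ⟨k, rfl⟩ := Fin.exists_succAbove_eq hj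
    exact f.map_eq_zero_of_eq _ (i := 0) (j := k.succ) rfl (Fin.succ_ne_zero k).symm
  -- `AlternatingMap` has no `sum_apply`, so expand `w` through the underlying multilinear map.
  change f.toMultilinearMap.curryLeft w (b ∘ i.succAbove) = _
  conv_lhs => rw [← b.sum_repr w]
  rw [map_sum, sum_apply, Finset.sum_eq_single_of_mem i (Finset.mem_univ i)
    (fun j _ hj => by rw [map_smul, _root_.smul_apply]; exact (hb_ne j hj).symm ▸ smul_zero _),
    map_smul, _root_.smul_apply]
  change _ • f.curryLeft (b i) (b ∘ i.succAbove) = _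
  rw [hb_self, smul_smul, mul_comm]

theorem ext_basis_comp_succAbove {R M N : Type*} [CommRing R] [AddCommGroup M]
    [Module R M] [AddCommGroup N] [Module R N] {n : ℕ} {f g : M [⋀^Fin n]→ₗ[R] N}
    (b : Module.Basis (Fin (n + 1)) R M)
    (h : ∀ i : Fin (n + 1), f (b ∘ i.succAbove) = g (b ∘ i.succAbove)) : f = g := by
  refine b.ext_alternating fun v hv => ?_
  obtain ⟨i, hi⟩ : ∃ i, ∀ j, v j ≠ i := by
    by_contra! hsurj
    simpa using Fintype.card_le_of_surjective v hsurj
  choose u hu using fun j => Fin.exists_succAbove_eq (hi j)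
  have hu_bij : u.Bijective := Finite.injective_iff_bijective.mp fun j k hjk =>
    hv (by rw [← hu j, ← hu k, hjk])
  have hv_comp : (fun j => b (v j)) = (b ∘ i.succAbove) ∘ Equiv.ofBijective u hu_bij := by
    funext j; simp [hu]
  rw [hv_comp, f.map_perm, g.map_perm, h i]

theorem curryLeft_bijective_of_ne_zero {K M : Type*} [Field K] [AddCommGroup M] [Module K M]
    {n : ℕ} (b : Module.Basis (Fin (n + 1)) K M) {θ : M [⋀^Fin (n + 1)]→ₗ[K] K} (hθ : θ ≠ 0) :
    Function.Bijective θ.curryLeft := by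
  have hθb : θ b ≠ 0 := fun h => hθ (by rw [θ.eq_smul_basis_det b, h, zero_smul])
  have hcoeff (i : Fin (n + 1)) : (-1 : K) ^ (i : ℕ) * θ b ≠ 0 :=
    mul_ne_zero (pow_ne_zero _ (neg_ne_zero.mpr one_ne_zero)) hθb
  refine ⟨(injective_iff_map_eq_zero _).mpr fun w hw => b.repr.injective ?_, fun η => ?_⟩
  · ext i
    have hi := θ.curryLeft_apply_basis_comp_succAbove b w i
    rw [hw, zero_apply, smul_eq_mul, mul_right_comm, eq_comm, mul_eq_zero] at hi
    simpa using hi.resolve_left (hcoeff i)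
  · refine ⟨b.equivFun.symm fun i => η (b ∘ i.succAbove) / ((-1) ^ (i : ℕ) * θ b),
      ext_basis_comp_succAbove b fun i => ?_⟩
    rw [curryLeft_apply_basis_comp_succAbove, ← b.equivFun_apply, b.equivFun.apply_symm_apply,
      smul_eq_mul, mul_right_comm, mul_div_cancel₀ _ (hcoeff i)]

end AlternatingMap

theorem LinearEquiv.existsUnique_apply_eq_linearMap {R M N P : Type*} [Semiring R]
    [AddCommMonoid M] [Module R M] [AddCommMonoid N] [Module R N] [AddCommMonoid P] [Module R P]
    (e : M ≃ₗ[R] N) (L : P →ₗ[R] N) : ∃! Q : P →ₗ[R] M, ∀ v, L v = e (Q v) :=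
  ⟨e.symm.toLinearMap ∘ₗ L, fun v => (e.apply_symm_apply (L v)).symm,
    fun _ hQ => LinearMap.ext fun v => e.eq_symm_apply.mpr (hQ v).symm⟩

noncomputable def wedgeRight {V : Type*} [AddCommGroup V] [Module ℝ V] {p q : ℕ}
    (β : V [⋀^Fin q]→ₗ[ℝ] ℝ) : (V [⋀^Fin p]→ₗ[ℝ] ℝ) →ₗ[ℝ] V [⋀^Fin (p + q)]→ₗ[ℝ] ℝ :=
  (AlternatingMap.domDomCongrₗ ℝ finSumFinEquiv).toLinearMap ∘ₗ
    (LinearMap.mul' ℝ ℝ).compAlternatingMapₗ ℝ ∘ₗ AlternatingMap.domCoprod' ∘ₗ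
      (TensorProduct.mk ℝ _ _).flip β

theorem wedgeRight_apply {V : Type*} [AddCommGroup V] [Module ℝ V] {p q : ℕ}
    (α : V [⋀^Fin p]→ₗ[ℝ] ℝ) (β : V [⋀^Fin q]→ₗ[ℝ] ℝ) : wedgeRight β α = wedge α β :=
  rfl

/-- Existence and uniqueness of the linear map `Q` with `(ι_v ω) ∧ ω = ι_{Q v} θ`. -/
theorem exists_unique_Q
    {V : Type*} [AddCommGroup V] [Module ℝ V] [FiniteDimensional ℝ V]
    (hV : Module.finrank ℝ V = 6)
    (ω : V [⋀^Fin 3]→ₗ[ℝ] ℝ) (θ : V [⋀^Fin 6]→ₗ[ℝ] ℝ) (hθ : θ ≠ 0) :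
    ∃! Q : V →ₗ[ℝ] V, ∀ v : V, wedge (iota v ω) ω = iota (Q v) θ := by
  let L : V →ₗ[ℝ] V [⋀^Fin 5]→ₗ[ℝ] ℝ := wedgeRight ω ∘ₗ ω.curryLeft
  -- A bare `rfl` would unfold `wedge` through `domCoprod'` and exhaust the recursion depth.
  have hL (v : V) : wedge (iota v ω) ω = L v := by
    rw [LinearMap.comp_apply, wedgeRight_apply]
    rfl
  let ιθ := LinearEquiv.ofBijective θ.curryLeft
    (θ.curryLeft_bijective_of_ne_zero (Module.finBasisOfFinrankEq ℝ V hV) hθ)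
  have hιθ (x : V) : iota x θ = ιθ x := rfl
  refine (existsUnique_congr fun Q => forall_congr' fun v => ?_).mpr
    (ιθ.existsUnique_apply_eq_linearMap L)
  rw [hL, hιθ]
end

section
/- Let V be a 6-dimensional real vector space and ω an alternating 3-form on V with Δ(ω) = {0}. Fix a nonzero alternating 6-form θ on V and let Q : V → V be the unique linear map with (ι_vω)∧ω = ι_{Q(v)}θ for all v ∈ V. Then Q is a linear automorphism of V, and for every v ≠ 0 the vectors v and Q(v) are linearly independent. -/
open scoped TensorProduct

/-!
By the Leibniz rule for contraction and `ι_v ι_v ω = 0`,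
`ι_v ((ι_v ω) ∧ ω) = (ι_v ω) ∧ (ι_v ω)`. If `Q w = c • w`, then
`(ι_w ω) ∧ (ι_w ω) = ι_w ι_{c w} θ = 0`, i.e. `w ∈ Δ(ω) = {0}`. Hence `Q` has no eigenvector:
it is injective, hence bijective, and `Q v` is never a multiple of `v ≠ 0`.
-/

open Equiv Equiv.Perm Matrix

lemma sum_sign_mul_comp_mul {ι V : Type*} [Fintype ι] [DecidableEq ι] (F : (ι → V) → ℝ)
    (x : ι → V) (π : Perm ι) :
    ∑ τ : Perm ι, ((sign τ : ℤ) : ℝ) * F ((x ∘ τ) ∘ π) =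
      (sign π : ℤ) * ∑ τ : Perm ι, ((sign τ : ℤ) : ℝ) * F (x ∘ τ) := by
  conv_rhs => rw [← Fintype.sum_equiv (Equiv.mulRight π) _ _ fun _ => rfl, Finset.mul_sum]
  refine Finset.sum_congr rfl fun τ _ => ?_
  have hπ : ((sign π : ℤ) : ℝ) * (sign π : ℤ) = 1 := by
    rw [← Int.cast_mul, ← Units.val_mul, Int.units_mul_self, Units.val_one, Int.cast_one]
  rw [coe_mulRight, Perm.sign_mul, Units.val_mul, Int.cast_mul, coe_mul, Function.comp_assoc]
  linear_combination -(((sign τ : ℤ) : ℝ) * F (x ∘ τ ∘ π)) * hπ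

/-- Write `σ⁻¹ = swap 0 p * τ'` with `τ'` fixing `0` (`Equiv.Perm.decomposeFin`), so that
`p = σ⁻¹ 0` is the slot of `vecCons v x ∘ σ` holding `v`. -/
lemma sum_perm_fin_succ_vecCons {V : Type*} {n : ℕ} (F : (Fin (n + 1) → V) → ℝ) (v : V)
    (x : Fin n → V) :
    ∑ σ : Perm (Fin (n + 1)), ((sign σ : ℤ) : ℝ) * F (vecCons v x ∘ σ) =
      ∑ τ : Perm (Fin n), ((sign τ : ℤ) : ℝ) *
        ∑ p, ((sign (swap 0 p) : ℤ) : ℝ) * F (vecCons v (x ∘ τ) ∘ swap 0 p) := by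
  let e : Fin (n + 1) × Perm (Fin n) ≃ Perm (Fin (n + 1)) :=
    ((Equiv.refl _).prodCongr (Equiv.inv _)).trans (decomposeFin.symm.trans (Equiv.inv _))
  have he : ∀ p τ, vecCons v x ∘ e (p, τ) = vecCons v (x ∘ τ) ∘ swap 0 p := by
    intro p τ
    refine (Equiv.comp_symm_eq _ _ _).2 (funext fun j => ?_)
    refine Fin.cases ?_ (fun i => ?_) j
    · simp [decomposeFin_symm_apply_zero]
    · simp [decomposeFin_symm_apply_succ]
  have hs : ∀ p τ, sign (e (p, τ)) = sign (swap 0 p) * sign τ := by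
    intro p τ
    rcases eq_or_ne p 0 with rfl | hp
    · simp [e, decomposeFin.symm_sign]
    · simp [e, decomposeFin.symm_sign, hp, sign_swap hp.symm]
  rw [← Fintype.sum_equiv e _ _ fun _ => rfl, Fintype.sum_prod_type, Finset.sum_comm]
  refine Finset.sum_congr rfl fun τ _ => ?_
  rw [Finset.mul_sum]
  refine Finset.sum_congr rfl fun p _ => ?_
  rw [he, hs]
  push_cast
  ring

section Wedge
variable {V : Type*} [AddCommGroup V] [Module ℝ V]

def wedgeTerm {p q : ℕ} (α : V [⋀^Fin p]→ₗ[ℝ] ℝ) (β : V [⋀^Fin q]→ₗ[ℝ] ℝ)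
    (y : Fin (p + q) → V) : ℝ :=
  α (y ∘ Fin.castAdd q) * β (y ∘ Fin.natAdd p)

lemma factorial_mul_wedge_apply {p q : ℕ} (α : V [⋀^Fin p]→ₗ[ℝ] ℝ) (β : V [⋀^Fin q]→ₗ[ℝ] ℝ)
    (z : Fin (p + q) → V) :
    ((p.factorial * q.factorial : ℕ) : ℝ) * wedge α β z =
      ∑ σ : Perm (Fin (p + q)), ((sign σ : ℤ) : ℝ) * wedgeTerm α β (z ∘ σ) := by
  have h := MultilinearMap.domCoprod_alternization_eq α β
  rw [Fintype.card_fin, Fintype.card_fin] at h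
  have hw : wedge α β z = LinearMap.mul' ℝ ℝ ((α.domCoprod β) (z ∘ finSumFinEquiv)) := rfl
  rw [hw, ← nsmul_eq_mul (p.factorial * q.factorial), ← map_nsmul, ← AlternatingMap.smul_apply,
    ← h, MultilinearMap.alternatization_apply, map_sum]
  refine Fintype.sum_equiv (permCongr finSumFinEquiv) _ _ fun σ => ?_
  rw [MultilinearMap.domDomCongr_apply, Units.smul_def, map_zsmul, sign_permCongr, zsmul_eq_mul]
  congr 1
  simp [wedgeTerm, MultilinearMap.domCoprod_apply, Function.comp_def, permCongr_apply]

lemma iota_apply {n : ℕ} (v : V) (μ : V [⋀^Fin (n + 1)]→ₗ[ℝ] ℝ) (y : Fin n → V) :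
    iota v μ y = μ (vecCons v y) := rfl

lemma iota_iota_smul_self {n : ℕ} (θ : V [⋀^Fin (n + 2)]→ₗ[ℝ] ℝ) (v : V) (c : ℝ) :
    iota v (iota (c • v) θ) = 0 := by
  simp only [iota, map_smul, AlternatingMap.curryLeft_smul, LinearMap.smul_apply,
    AlternatingMap.curryLeft_same, smul_zero]

end Wedge

lemma AlternatingMap.map_vecCons_swap_left {R M N : Type*} [CommRing R] [AddCommGroup M]
    [Module R M] [AddCommGroup N] [Module R N] (f : M [⋀^Fin 3]→ₗ[R] N) (a b c : M) :
    f ![b, a, c] = -f ![a, b, c] := by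
  rw [← f.map_swap ![a, b, c] (show (0 : Fin 3) ≠ 1 by decide)]
  congr 1
  funext j
  fin_cases j <;> rfl

lemma AlternatingMap.map_vecCons_swap_right {R M N : Type*} [CommRing R] [AddCommGroup M]
    [Module R M] [AddCommGroup N] [Module R N] (f : M [⋀^Fin 3]→ₗ[R] N) (a b c : M) :
    f ![a, c, b] = -f ![a, b, c] := by
  rw [← f.map_swap ![a, b, c] (show (1 : Fin 3) ≠ 2 by decide)]
  congr 1
  funext j
  fin_cases j <;> rfl

lemma comp_castAdd_two_three {V : Type*} (y : Fin (2 + 3) → V) :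
    y ∘ Fin.castAdd 3 = ![y 0, y 1] := by
  funext i; fin_cases i <;> rfl

lemma comp_natAdd_two_three {V : Type*} (y : Fin (2 + 3) → V) :
    y ∘ Fin.natAdd 2 = ![y 2, y 3, y 4] := by
  funext i; fin_cases i <;> rfl

lemma comp_castAdd_two_two {V : Type*} (w : Fin (2 + 2) → V) :
    w ∘ Fin.castAdd 2 = ![w 0, w 1] := by
  funext i; fin_cases i <;> rfl

lemma comp_natAdd_two_two {V : Type*} (w : Fin (2 + 2) → V) :
    w ∘ Fin.natAdd 2 = ![w 2, w 3] := by
  funext i; fin_cases i <;> rfl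

section ThreeForm
variable {V : Type*} [AddCommGroup V] [Module ℝ V]

/-- For `p = 0, 1` the vector `v` lands in the `ι_v ω` factor and the term vanishes; for
`p = 2, 3, 4` it lands in the `ω` factor, and moving it to the front yields a term of
`(ι_v ω) ∧ (ι_v ω)` with its arguments permuted. -/
lemma sum_sign_swap_mul_wedgeTerm_iota (ω : V [⋀^Fin 3]→ₗ[ℝ] ℝ) (v : V) (w : Fin 4 → V) :
    ∑ p : Fin 5, ((sign (swap 0 p) : ℤ) : ℝ) *
        wedgeTerm (iota v ω) ω (vecCons v w ∘ swap 0 p) =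
      wedgeTerm (iota v ω) (iota v ω) w - wedgeTerm (iota v ω) (iota v ω) (w ∘ swap 1 2) -
        wedgeTerm (iota v ω) (iota v ω) (w ∘ swap 1 3) := by
  simp only [wedgeTerm, iota_apply, Fin.sum_univ_five, comp_castAdd_two_three,
    comp_natAdd_two_three, comp_castAdd_two_two, comp_natAdd_two_two]
  simp only [Fin.isValue, swap_self, sign_refl, Units.val_one, Int.cast_one, Nat.reduceAdd,
    Nat.succ_eq_add_one, coe_refl, Function.comp_apply, id_eq, cons_val_zero, cons_val_one,
    cons_val, one_mul, sign_swap', zero_ne_one, ↓reduceIte, Units.val_neg, Int.reduceNeg,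
    Int.cast_neg, swap_apply_left, swap_apply_right, swap_apply_def, Fin.reduceEq, neg_mul,
    one_ne_zero]
  rw [ω.map_vecCons_swap_right v (w 0) (w 1), ω.map_vecCons_swap_right v (w 0) (w 2),
    ω.map_vecCons_swap_right v (w 0) (w 3), ω.map_vecCons_swap_right v (w 1) (w 2),
    ω.map_vecCons_swap_left v (w 1) (w 3), ω.map_vecCons_swap_right (w 1) v (w 2),
    ω.map_vecCons_swap_left v (w 1) (w 2),
    ω.map_eq_zero_of_eq ![v, v, w 0] (i := 0) (j := 1) rfl (by decide),
    ω.map_eq_zero_of_eq ![v, w 0, v] (i := 0) (j := 2) rfl (by decide)]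
  ring

lemma iota_wedge_iota_self (ω : V [⋀^Fin 3]→ₗ[ℝ] ℝ) (v : V) :
    iota v (wedge (iota v ω) ω : V [⋀^Fin 5]→ₗ[ℝ] ℝ) = wedge (iota v ω) (iota v ω) := by
  refine AlternatingMap.ext fun (x : Fin 4 → V) =>
    mul_left_cancel₀ (show (12 : ℝ) ≠ 0 by norm_num) ?_
  set G := wedgeTerm (iota v ω) (iota v ω)
  have h23 := factorial_mul_wedge_apply (iota v ω) ω (vecCons v x)
  have h22 := factorial_mul_wedge_apply (iota v ω) (iota v ω) x
  norm_num [Nat.factorial] at h23 h22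
  calc (12 : ℝ) * iota v (wedge (iota v ω) ω : V [⋀^Fin 5]→ₗ[ℝ] ℝ) x
      = ∑ τ : Perm (Fin 4), ((sign τ : ℤ) : ℝ) *
          (G (x ∘ τ) - G ((x ∘ τ) ∘ swap 1 2) - G ((x ∘ τ) ∘ swap 1 3)) := by
        rw [iota_apply, h23]
        exact (sum_perm_fin_succ_vecCons _ v x).trans <| Finset.sum_congr rfl fun τ _ =>
          congrArg _ (sum_sign_swap_mul_wedgeTerm_iota ω v (x ∘ τ))
    _ = 3 * ∑ τ : Perm (Fin 4), ((sign τ : ℤ) : ℝ) * G (x ∘ τ) := by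
        simp only [mul_sub, Finset.sum_sub_distrib, sum_sign_mul_comp_mul,
          sign_swap (show (1 : Fin 4) ≠ 2 by decide), sign_swap (show (1 : Fin 4) ≠ 3 by decide)]
        push_cast
        ring
    _ = 12 * wedge (iota v ω) (iota v ω) x := by
        rw [← h22]
        ring

end ThreeForm

theorem Q_bijective_and_linearIndependent_general
    {V : Type*} [AddCommGroup V] [Module ℝ V] [FiniteDimensional ℝ V]
    (ω : V [⋀^Fin 3]→ₗ[ℝ] ℝ) (hΔ : Delta ω = {0})
    (θ : V [⋀^Fin 6]→ₗ[ℝ] ℝ)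
    (Q : V →ₗ[ℝ] V) (hQ : ∀ v : V, wedge (iota v ω) ω = iota (Q v) θ) :
    Function.Bijective Q ∧ ∀ v : V, v ≠ 0 → LinearIndependent ℝ ![v, Q v] := by
  have no_eigenvector : ∀ (w : V) (c : ℝ), Q w = c • w → w = 0 := by
    intro w c hw
    have hmem : w ∈ Delta ω := by
      change wedge (iota w ω) (iota w ω) = 0
      rw [← iota_wedge_iota_self, hQ, hw, iota_iota_smul_self]
    simpa [hΔ] using hmem
  have hinj : Function.Injective Q :=
    (injective_iff_map_eq_zero Q).2 fun w hw => no_eigenvector w 0 (by rw [hw, zero_smul])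
  exact ⟨⟨hinj, LinearMap.injective_iff_surjective.mp hinj⟩, fun v hv =>
    (LinearIndependent.pair_iff' hv).2 fun c hc => hv (no_eigenvector v c hc.symm)⟩

/-- If `Δ(ω) = {0}`, the map `Q` with `(ι_v ω) ∧ ω = ι_{Q v} θ` is an automorphism of `V`,
and for every `v ≠ 0` the vectors `v` and `Q v` are linearly independent. -/
theorem Q_bijective_and_linearIndependent
    {V : Type*} [AddCommGroup V] [Module ℝ V] [FiniteDimensional ℝ V]
    (hV : Module.finrank ℝ V = 6)
    (ω : V [⋀^Fin 3]→ₗ[ℝ] ℝ) (hΔ : Delta ω = {0})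
    (θ : V [⋀^Fin 6]→ₗ[ℝ] ℝ) (hθ : θ ≠ 0)
    (Q : V →ₗ[ℝ] V) (hQ : ∀ v : V, wedge (iota v ω) ω = iota (Q v) θ) :
    Function.Bijective Q ∧ ∀ v : V, v ≠ 0 → LinearIndependent ℝ ![v, Q v] :=
  Q_bijective_and_linearIndependent_general ω hΔ θ Q hQ
end

section
/- Let V be a 6-dimensional real vector space and ω an alternating 3-form on V with Δ(ω) = {0}. Fix a nonzero alternating 6-form θ on V and let Q : V → V be the unique linear map with (ι_vω)∧ω = ι_{Q(v)}θ for all v ∈ V. Then for every v ∈ V one has ι_{Q(v)}ι_vω = 0, i.e. ω(v, Q(v), u) = 0 for all u ∈ V. -/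
open scoped TensorProduct

open Equiv

section Aux

variable {V : Type*} [AddCommGroup V] [Module ℝ V]

set_option maxHeartbeats 800000 in
theorem wedge_sum {p q : ℕ}
    (a : V [⋀^Fin p]→ₗ[ℝ] ℝ) (b : V [⋀^Fin q]→ₗ[ℝ] ℝ) (m : Fin (p+q) → V) :
    ((p.factorial * q.factorial : ℕ) : ℝ) • wedge a b m =
      ∑ σ : Equiv.Perm (Fin p ⊕ Fin q), (Equiv.Perm.sign σ : ℤ) •
        (a (fun i => m (finSumFinEquiv (σ (Sum.inl i)))) *
         b (fun i => m (finSumFinEquiv (σ (Sum.inr i))))) := by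
  have h := MultilinearMap.domCoprod_alternization_eq (R' := ℝ) (Mᵢ := V) (N₁ := ℝ) (N₂ := ℝ) a b
  have h2 := congrArg (fun f : V [⋀^(Fin p ⊕ Fin q)]→ₗ[ℝ] (ℝ ⊗[ℝ] ℝ) =>
      LinearMap.mul' ℝ ℝ (f (m ∘ finSumFinEquiv))) h
  simp only [AlternatingMap.smul_apply, map_nsmul, Fintype.card_fin] at h2
  have hw : wedge a b m = (LinearMap.mul' ℝ ℝ) ((a.domCoprod b) (m ∘ finSumFinEquiv)) := by
    simp [wedge, AlternatingMap.domDomCongr_apply, LinearMap.compAlternatingMap_apply]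
  rw [hw, Nat.cast_smul_eq_nsmul, ← h2, MultilinearMap.alternatization_apply, map_sum]
  refine Finset.sum_congr rfl fun σ _ => ?_
  rw [Units.smul_def, map_zsmul]
  simp [MultilinearMap.domDomCongr_apply, MultilinearMap.domCoprod_apply, Function.comp,
    LinearMap.mul'_apply]

theorem wedge_sum' {p q : ℕ}
    (a : V [⋀^Fin p]→ₗ[ℝ] ℝ) (b : V [⋀^Fin q]→ₗ[ℝ] ℝ) (m : Fin (p+q) → V) :
    ((p.factorial * q.factorial : ℕ) : ℝ) • wedge a b m =
      ∑ π : Equiv.Perm (Fin (p + q)), (Equiv.Perm.sign π : ℤ) •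
        (a (fun i => m (π (Fin.castAdd q i))) *
         b (fun i => m (π (Fin.natAdd p i)))) := by
  rw [wedge_sum]
  rw [← Equiv.sum_comp (finSumFinEquiv.permCongr :
        Equiv.Perm (Fin p ⊕ Fin q) ≃ Equiv.Perm (Fin (p + q)))
      (fun π => (Equiv.Perm.sign π : ℤ) •
        (a (fun i => m (π (Fin.castAdd q i))) * b (fun i => m (π (Fin.natAdd p i)))))]
  refine Finset.sum_congr rfl fun σ _ => ?_
  simp [Equiv.Perm.sign_permCongr, Equiv.permCongr_apply,
    finSumFinEquiv_symm_apply_castAdd, finSumFinEquiv_symm_apply_natAdd]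

lemma perm_sum_succ {n : ℕ} {M : Type*} [AddCommMonoid M] (f : Equiv.Perm (Fin (n+1)) → M) :
    ∑ π, f π = ∑ i : Fin (n+1), ∑ τ : Equiv.Perm (Fin n),
      f (Equiv.Perm.decomposeFin.symm (i, τ)) := by
  rw [← Equiv.sum_comp (Equiv.Perm.decomposeFin.symm) f, Fintype.sum_prod_type]

lemma perm_sum_zero {M : Type*} [AddCommMonoid M] (f : Equiv.Perm (Fin 0) → M) :
    ∑ π, f π = f 1 := by
  rw [Fintype.sum_subsingleton f 1]

lemma df32 (p : Fin 3) (e : Perm (Fin 2)) :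
    Equiv.Perm.decomposeFin.symm (p, e) 2 = Equiv.swap 0 p (e 1).succ := by
  rw [show (2 : Fin 3) = (1 : Fin 2).succ by decide]
  exact Equiv.Perm.decomposeFin_symm_apply_succ e p 1
lemma df42 (p : Fin 4) (e : Perm (Fin 3)) :
    Equiv.Perm.decomposeFin.symm (p, e) 2 = Equiv.swap 0 p (e 1).succ := by
  rw [show (2 : Fin 4) = (1 : Fin 3).succ by decide]
  exact Equiv.Perm.decomposeFin_symm_apply_succ e p 1
lemma df43 (p : Fin 4) (e : Perm (Fin 3)) :
    Equiv.Perm.decomposeFin.symm (p, e) 3 = Equiv.swap 0 p (e 2).succ := by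
  rw [show (3 : Fin 4) = (2 : Fin 3).succ by decide]
  exact Equiv.Perm.decomposeFin_symm_apply_succ e p 2
lemma df52 (p : Fin 5) (e : Perm (Fin 4)) :
    Equiv.Perm.decomposeFin.symm (p, e) 2 = Equiv.swap 0 p (e 1).succ := by
  rw [show (2 : Fin 5) = (1 : Fin 4).succ by decide]
  exact Equiv.Perm.decomposeFin_symm_apply_succ e p 1
lemma df53 (p : Fin 5) (e : Perm (Fin 4)) :
    Equiv.Perm.decomposeFin.symm (p, e) 3 = Equiv.swap 0 p (e 2).succ := by
  rw [show (3 : Fin 5) = (2 : Fin 4).succ by decide]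
  exact Equiv.Perm.decomposeFin_symm_apply_succ e p 2
lemma df54 (p : Fin 5) (e : Perm (Fin 4)) :
    Equiv.Perm.decomposeFin.symm (p, e) 4 = Equiv.swap 0 p (e 3).succ := by
  rw [show (4 : Fin 5) = (3 : Fin 4).succ by decide]
  exact Equiv.Perm.decomposeFin_symm_apply_succ e p 3

lemma s10 : Fin.succ (0 : Fin 1) = 1 := by decide
lemma s20 : Fin.succ (0 : Fin 2) = 1 := by decide
lemma s21 : Fin.succ (1 : Fin 2) = 2 := by decide
lemma s30 : Fin.succ (0 : Fin 3) = 1 := by decide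
lemma s31 : Fin.succ (1 : Fin 3) = 2 := by decide
lemma s32 : Fin.succ (2 : Fin 3) = 3 := by decide
lemma s40 : Fin.succ (0 : Fin 4) = 1 := by decide
lemma s41 : Fin.succ (1 : Fin 4) = 2 := by decide
lemma s42 : Fin.succ (2 : Fin 4) = 3 := by decide
lemma s43 : Fin.succ (3 : Fin 4) = 4 := by decide

theorem wedge22 (a b : V [⋀^Fin 2]→ₗ[ℝ] ℝ) (m : Fin 4 → V) :
    (4 : ℝ) • wedge a b m =
      ∑ π : Equiv.Perm (Fin 4), (Equiv.Perm.sign π : ℤ) •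
        (a ![m (π 0), m (π 1)] * b ![m (π 2), m (π 3)]) := by
  have h := wedge_sum' (p := 2) (q := 2) a b m
  rw [show ((Nat.factorial 2 * Nat.factorial 2 : ℕ) : ℝ) = 4 by norm_num [Nat.factorial]] at h
  rw [h]
  refine Finset.sum_congr rfl fun π _ => ?_
  congr 1
  congr 1
  · congr 1; funext i; fin_cases i <;> rfl
  · congr 1; funext i; fin_cases i <;> rfl

theorem wedge23 (a : V [⋀^Fin 2]→ₗ[ℝ] ℝ) (b : V [⋀^Fin 3]→ₗ[ℝ] ℝ) (m : Fin 5 → V) :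
    (12 : ℝ) • wedge a b m =
      ∑ π : Equiv.Perm (Fin 5), (Equiv.Perm.sign π : ℤ) •
        (a ![m (π 0), m (π 1)] * b ![m (π 2), m (π 3), m (π 4)]) := by
  have h := wedge_sum' (p := 2) (q := 3) a b m
  rw [show ((Nat.factorial 2 * Nat.factorial 3 : ℕ) : ℝ) = 12 by norm_num [Nat.factorial]] at h
  rw [h]
  refine Finset.sum_congr rfl fun π _ => ?_
  congr 1
  congr 1
  · congr 1; funext i; fin_cases i <;> rfl
  · congr 1; funext i; fin_cases i <;> rfl

set_option maxHeartbeats 1600000 in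
theorem wedge_sq_zero (b : V [⋀^Fin 2]→ₗ[ℝ] ℝ) (g d : V → ℝ)
    (h : ∀ y z : V, b ![y, z] = g y * d z - g z * d y) :
    wedge b b = 0 := by
  ext m
  have h4 := wedge22 b b m
  rw [AlternatingMap.zero_apply]
  have key : (4 : ℝ) • wedge b b m = 0 := by
    rw [h4]
    simp only [perm_sum_succ, perm_sum_zero, Fin.sum_univ_succ, Fin.sum_univ_zero]
    simp (config := { decide := true }) only [Equiv.Perm.decomposeFin.symm_sign,
      Equiv.Perm.decomposeFin_symm_apply_zero,
      Equiv.Perm.decomposeFin_symm_apply_one, Equiv.Perm.decomposeFin_symm_apply_succ,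
      df32, df42, df43, s10, s20, s21, s30, s31, s32,
      Equiv.swap_apply_def, h, Fin.succ_ne_zero, Equiv.Perm.sign_one, Equiv.swap_self,
      Equiv.Perm.sign_refl, Equiv.refl_apply, Units.val_one, Units.val_neg, Int.cast_one,
      Int.cast_neg, if_true, if_false, Equiv.Perm.sign_swap, Equiv.Perm.one_apply,
      Units.val_mul, zsmul_eq_mul, Int.cast_mul, neg_neg, neg_mul, mul_neg, one_mul, mul_one]
    ring
  have h40 : (4:ℝ) ≠ 0 := by norm_num
  rcases smul_eq_zero.mp key with h' | h'
  · exact absurd h' h40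
  · exact h'

lemma tri_swap01 (f : V [⋀^Fin 3]→ₗ[ℝ] ℝ) (a b c : V) : f ![b, a, c] = -f ![a, b, c] := by
  have h := f.map_swap ![a,b,c] (show (0 : Fin 3) ≠ 1 by decide)
  rw [← h]
  congr 1; funext i; fin_cases i <;> simp [Equiv.swap_apply_def]
lemma tri_swap12 (f : V [⋀^Fin 3]→ₗ[ℝ] ℝ) (a b c : V) : f ![a, c, b] = -f ![a, b, c] := by
  have h := f.map_swap ![a,b,c] (show (1 : Fin 3) ≠ 2 by decide)
  rw [← h]
  congr 1; funext i; fin_cases i <;> simp [Equiv.swap_apply_def]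
lemma tri_zero01 (f : V [⋀^Fin 3]→ₗ[ℝ] ℝ) (a c : V) : f ![a, a, c] = 0 :=
  f.map_eq_zero_of_eq _ (by simp) (show (0 : Fin 3) ≠ 1 by decide)
lemma tri_zero02 (f : V [⋀^Fin 3]→ₗ[ℝ] ℝ) (a b : V) : f ![a, b, a] = 0 :=
  f.map_eq_zero_of_eq _ (by simp) (show (0 : Fin 3) ≠ 2 by decide)

set_option maxHeartbeats 4000000 in
theorem key_rel (ω : V [⋀^Fin 3]→ₗ[ℝ] ℝ) (θ : V [⋀^Fin 6]→ₗ[ℝ] ℝ) (v w : V)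
    (hQv : wedge (iota v ω) ω = iota w θ) (x y z : V) :
    ω ![v,w,x] * ω ![v,y,z] - ω ![v,w,y] * ω ![v,x,z] + ω ![v,w,z] * ω ![v,x,y] = 0 := by
  have h5 := wedge23 (iota v ω) ω ![v,w,x,y,z]
  rw [hQv] at h5
  have h0 : iota w θ ![v,w,x,y,z] = 0 :=
    θ.map_eq_zero_of_eq ![w,v,w,x,y,z] (show ![w,v,w,x,y,z] 0 = ![w,v,w,x,y,z] 2 by simp)
      (show (0 : Fin 6) ≠ 2 by decide)
  rw [h0, smul_zero] at h5
  have hiota : ∀ s t : V, iota v ω ![s, t] = ω ![v, s, t] := fun s t => rfl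
  have r1 : ∀ t, ω ![v, v, t] = 0 := fun t => tri_zero01 ω v t
  have r2 : ∀ t, ω ![v, t, v] = 0 := fun t => tri_zero02 ω v t
  have rBw : ∀ t, ω ![w, v, t] = -ω ![v, w, t] := fun t => tri_swap01 ω v w t
  have rBx : ∀ t, ω ![x, v, t] = -ω ![v, x, t] := fun t => tri_swap01 ω v x t
  have rBy : ∀ t, ω ![y, v, t] = -ω ![v, y, t] := fun t => tri_swap01 ω v y t
  have rBz : ∀ t, ω ![z, v, t] = -ω ![v, z, t] := fun t => tri_swap01 ω v z t
  have rC : ∀ s t, ω ![s, t, v] = ω ![v, s, t] := fun s t => by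
    rw [tri_swap12 ω s v t, tri_swap01 ω v s t, neg_neg]
  have o1 : ω ![v,x,w] = -ω ![v,w,x] := tri_swap12 ω v w x
  have o2 : ω ![v,y,w] = -ω ![v,w,y] := tri_swap12 ω v w y
  have o3 : ω ![v,y,x] = -ω ![v,x,y] := tri_swap12 ω v x y
  have o4 : ω ![v,z,w] = -ω ![v,w,z] := tri_swap12 ω v w z
  have o5 : ω ![v,z,x] = -ω ![v,x,z] := tri_swap12 ω v x z
  have o6 : ω ![v,z,y] = -ω ![v,y,z] := tri_swap12 ω v y z
  simp (config := { decide := true }) only [perm_sum_succ, perm_sum_zero,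
    Fin.sum_univ_succ, Fin.sum_univ_zero,
    Equiv.Perm.decomposeFin.symm_sign, Equiv.Perm.decomposeFin_symm_apply_zero,
    Equiv.Perm.decomposeFin_symm_apply_one, Equiv.Perm.decomposeFin_symm_apply_succ,
    df32, df42, df43, df52, df53, df54, s10, s20, s21, s30, s31, s32, s40, s41, s42, s43,
    Equiv.swap_apply_def, Fin.succ_ne_zero, Equiv.Perm.sign_one, Equiv.swap_self,
    Equiv.Perm.sign_refl, Equiv.refl_apply, Units.val_one, Units.val_neg, Int.cast_one,
    Int.cast_neg, if_true, if_false, Equiv.Perm.sign_swap, Equiv.Perm.one_apply,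
    Units.val_mul, zsmul_eq_mul, Int.cast_mul, neg_neg, neg_mul, mul_neg, one_mul, mul_one,
    Matrix.cons_val_zero, Matrix.cons_val_one, Matrix.head_cons,
    Matrix.cons_val_two, Matrix.cons_val_three, Matrix.cons_val_four, Matrix.tail_cons,
    hiota, r1, r2, rBw, rBx, rBy, rBz, rC, o1, o2, o3, o4, o5, o6,
    zero_mul, mul_zero, neg_zero, add_zero, zero_add] at h5
  linarith [h5]

end Aux

/-- **Lemma 4.** If `Δ(ω) = {0}`, then for every `v` one has `ι_{Q v} ι_v ω = 0`,
i.e. `ω(v, Q v, u) = 0` for all `u ∈ V`. -/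
theorem omega_v_Qv_eq_zero
    {V : Type*} [AddCommGroup V] [Module ℝ V] [FiniteDimensional ℝ V]
    (hV : Module.finrank ℝ V = 6)
    (ω : V [⋀^Fin 3]→ₗ[ℝ] ℝ) (hΔ : Delta ω = {0})
    (θ : V [⋀^Fin 6]→ₗ[ℝ] ℝ) (hθ : θ ≠ 0)
    (Q : V →ₗ[ℝ] V) (hQ : ∀ v : V, wedge (iota v ω) ω = iota (Q v) θ) :
    ∀ v u : V, ω ![v, Q v, u] = 0 := by
  intro v u
  by_cases hγ : ∀ t, ω ![v, Q v, t] = 0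
  · exact hγ u
  · exfalso
    push_neg at hγ
    obtain ⟨u0, hu0⟩ := hγ
    have hk := key_rel ω θ v (Q v) (hQ v)
    have hb : ∀ y z : V, iota v ω ![y, z] =
        (ω ![v, Q v, y] / ω ![v, Q v, u0]) * ω ![v, u0, z]
          - (ω ![v, Q v, z] / ω ![v, Q v, u0]) * ω ![v, u0, y] := by
      intro y z
      have h := hk u0 y z
      have hyz : iota v ω ![y, z] = ω ![v, y, z] := rfl
      rw [hyz]
      field_simp
      linarith [h]
    have hsq : wedge (iota v ω) (iota v ω) = 0 :=
      wedge_sq_zero (iota v ω) (fun t => ω ![v, Q v, t] / ω ![v, Q v, u0])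
        (fun t => ω ![v, u0, t]) hb
    have hvΔ : v ∈ Delta ω := hsq
    rw [hΔ] at hvΔ
    have hv0 : v = 0 := hvΔ
    apply hu0
    rw [hv0]
    exact ω.map_coord_zero (i := 0) rfl
end

section
/- Let V be a 6-dimensional real vector space and ω an alternating 3-form on V with Δ(ω) = {0}. Fix a nonzero alternating 6-form θ on V and let Q : V → V be the unique linear map with (ι_vω)∧ω = ι_{Q(v)}θ for all v ∈ V. Then for every v ∈ V one has (ι_vω)∧(ι_{Q(v)}ω) = 0. -/
open scoped TensorProduct

/-!
Contract `(ι_v ω) ∧ ω = ι_{Qv} θ` first with `v`, then with `Q v`. The right side dies, as `θ` gets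
a repeated argument; on the left, `ι_v ι_v ω = 0` leaves `ι_{Qv}(ι_v ω ∧ ι_v ω) = 2 φ ∧ ι_v ω`
with `φ = ι_{Qv} ι_v ω`. If `φ ≠ 0`, then `φ ∧ ι_v ω = 0` forces `ι_v ω = φ ∧ ψ` for some `ψ`,
so `ι_v ω ∧ ι_v ω = 0` and `v ∈ Δ(ω) = {0}`, which contradicts `φ ≠ 0`. Hence `φ = 0`, and then
contracting with `Q v` alone gives `ι_v ω ∧ ι_{Qv} ω = ι_{Qv} ι_{Qv} θ = 0`.
-/

namespace AlternatingMap

variable {R M N : Type*} [Semiring R] [AddCommMonoid M] [Module R M] [AddCommGroup N] [Module R N]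

theorem map_fin_two_swap (γ : M [⋀^Fin 2]→ₗ[R] N) (u w : M) : γ ![u, w] = -γ ![w, u] := by
  rw [← γ.map_swap _ (show (0 : Fin 2) ≠ 1 by decide)]
  congr 1; ext k; fin_cases k <;> rfl

theorem map_fin_three_swap₀₁ (γ : M [⋀^Fin 3]→ₗ[R] N) (u v w : M) :
    γ ![u, v, w] = -γ ![v, u, w] := by
  rw [← γ.map_swap _ (show (0 : Fin 3) ≠ 1 by decide)]
  congr 1; ext k; fin_cases k <;> rfl

theorem map_fin_three_swap₁₂ (γ : M [⋀^Fin 3]→ₗ[R] N) (u v w : M) :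
    γ ![u, v, w] = -γ ![u, w, v] := by
  rw [← γ.map_swap _ (show (1 : Fin 3) ≠ 2 by decide)]
  congr 1; ext k; fin_cases k <;> rfl

end AlternatingMap

section Wedge

variable {V : Type*} [AddCommGroup V] [Module ℝ V]

theorem wedge_apply {p q : ℕ} (α : V [⋀^Fin p]→ₗ[ℝ] ℝ) (β : V [⋀^Fin q]→ₗ[ℝ] ℝ)
    (x : Fin (p + q) → V) :
    (p.factorial * q.factorial : ℕ) • wedge α β x
      = ∑ σ : Equiv.Perm (Fin (p + q)),
          (Equiv.Perm.sign σ : ℤ) • (α (fun i => x (σ (Fin.castAdd q i))) *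
            β (fun i => x (σ (Fin.natAdd p i)))) := by
  have hdom := MultilinearMap.domCoprod_alternization_eq (α : V [⋀^Fin p]→ₗ[ℝ] ℝ)
    (β : V [⋀^Fin q]→ₗ[ℝ] ℝ)
  have hx := congrArg (fun f : V [⋀^Fin p ⊕ Fin q]→ₗ[ℝ] ℝ ⊗[ℝ] ℝ =>
      (LinearMap.mul' ℝ ℝ) (f (fun j => x (finSumFinEquiv j)))) hdom.symm
  simp only [Fintype.card_fin] at hx
  have hwedge : wedge α β x
      = (LinearMap.mul' ℝ ℝ) ((α.domCoprod β) (fun j => x (finSumFinEquiv j))) := rfl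
  rw [AlternatingMap.smul_apply, map_nsmul] at hx
  rw [hwedge, hx, MultilinearMap.alternatization_apply]
  rw [map_sum (LinearMap.mul' ℝ ℝ) (fun σ : Equiv.Perm (Fin p ⊕ Fin q) =>
    Equiv.Perm.sign σ • (MultilinearMap.domDomCongr σ
      ((↑α : MultilinearMap ℝ (fun _ : Fin p => V) ℝ).domCoprod
        (↑β : MultilinearMap ℝ (fun _ : Fin q => V) ℝ))) fun j => x (finSumFinEquiv j))
    Finset.univ]
  refine Fintype.sum_equiv (Equiv.permCongr finSumFinEquiv) _ _ fun σ => ?_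
  rw [Units.smul_def, map_zsmul]
  congr 1
  · simp only [Equiv.Perm.sign_permCongr]
  · simp only [MultilinearMap.domDomCongr_apply, MultilinearMap.domCoprod_apply,
      LinearMap.mul'_apply, AlternatingMap.coe_multilinearMap]
    refine congrArg₂ (· * ·) ?_ ?_ <;> refine congrArg _ (funext fun i => ?_)
    · simp only [Equiv.permCongr_apply, finSumFinEquiv_symm_apply_castAdd]
    · simp only [Equiv.permCongr_apply, finSumFinEquiv_symm_apply_natAdd]

theorem wedge_two_two_apply (α β : V [⋀^Fin 2]→ₗ[ℝ] ℝ) (x : Fin 4 → V) :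
    wedge α β x =
      α ![x 0, x 1] * β ![x 2, x 3] - α ![x 0, x 2] * β ![x 1, x 3]
      + α ![x 0, x 3] * β ![x 1, x 2] + α ![x 1, x 2] * β ![x 0, x 3]
      - α ![x 1, x 3] * β ![x 0, x 2] + α ![x 2, x 3] * β ![x 0, x 1] := by
  have h := wedge_apply α β x
  have etaα : ∀ σ : Equiv.Perm (Fin 4),
      (α fun i => x (σ (Fin.castAdd 2 i))) = α ![x (σ 0), x (σ 1)] :=
    fun _ => congrArg α (FinVec.etaExpand_eq _).symm
  have etaβ : ∀ σ : Equiv.Perm (Fin 4),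
      (β fun i => x (σ (Fin.natAdd 2 i))) = β ![x (σ 2), x (σ 3)] :=
    fun _ => congrArg β (FinVec.etaExpand_eq _).symm
  simp only [etaα, etaβ] at h
  simp only [show (3 : Fin 4) = Fin.succ 2 from rfl, show (2 : Fin 4) = Fin.succ 1 from rfl,
    show (1 : Fin 4) = Fin.succ 0 from rfl, show (2 : Fin 3) = Fin.succ 1 from rfl,
    show (1 : Fin 3) = Fin.succ 0 from rfl, show (1 : Fin 2) = Fin.succ 0 from rfl] at h
  simp only [Finset.univ_perm_fin_succ, Finset.sum_map, Fintype.sum_prod_type,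
    Fin.sum_univ_succ, Equiv.coe_toEmbedding, Equiv.Perm.decomposeFin.symm_sign,
    Equiv.Perm.decomposeFin_symm_apply_zero, Equiv.Perm.decomposeFin_symm_apply_succ,
    Finset.univ_unique, Finset.sum_singleton] at h
  simp (config := { decide := true }) only [Nat.factorial_two, Nat.reduceMul, Nat.reduceAdd,
    nsmul_eq_mul, Nat.cast_ofNat, ↓reduceIte, Equiv.Perm.default_eq, Equiv.Perm.sign_one, mul_one,
    Units.val_one, Fin.isValue, Equiv.swap_self, Fin.succ, Nat.zero_mod, zero_add, Fin.mk_one,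
    Equiv.refl_apply, Fin.coe_ofNat_eq_mod, Nat.one_mod, Fin.reduceFinMk, Equiv.Perm.coe_one, id_eq,
    Nat.mod_succ, one_smul, mul_neg, Units.val_neg, Int.reduceNeg,
    Fin.default_eq_zero, Equiv.swap_apply_right, neg_smul, Equiv.swap_apply_def, neg_neg] at h
  -- The order hypotheses make `simp` sort the arguments instead of looping.
  have sortα : ∀ i j : Fin 4, j < i → α ![x i, x j] = -α ![x j, x i] :=
    fun _ _ _ => α.map_fin_two_swap _ _
  have sortβ : ∀ i j : Fin 4, j < i → β ![x i, x j] = -β ![x j, x i] :=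
    fun _ _ _ => β.map_fin_two_swap _ _
  simp (disch := decide) only [sortα, sortβ] at h
  linear_combination h / 4

theorem wedge_two_three_apply (α : V [⋀^Fin 2]→ₗ[ℝ] ℝ) (β : V [⋀^Fin 3]→ₗ[ℝ] ℝ)
    (x : Fin 5 → V) :
    wedge α β x =
      α ![x 0, x 1] * β ![x 2, x 3, x 4] - α ![x 0, x 2] * β ![x 1, x 3, x 4]
      + α ![x 0, x 3] * β ![x 1, x 2, x 4] - α ![x 0, x 4] * β ![x 1, x 2, x 3]
      + α ![x 1, x 2] * β ![x 0, x 3, x 4] - α ![x 1, x 3] * β ![x 0, x 2, x 4]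
      + α ![x 1, x 4] * β ![x 0, x 2, x 3] + α ![x 2, x 3] * β ![x 0, x 1, x 4]
      - α ![x 2, x 4] * β ![x 0, x 1, x 3] + α ![x 3, x 4] * β ![x 0, x 1, x 2] := by
  have h := wedge_apply α β x
  have etaα : ∀ σ : Equiv.Perm (Fin 5),
      (α fun i => x (σ (Fin.castAdd 3 i))) = α ![x (σ 0), x (σ 1)] :=
    fun _ => congrArg α (FinVec.etaExpand_eq _).symm
  have etaβ : ∀ σ : Equiv.Perm (Fin 5),
      (β fun i => x (σ (Fin.natAdd 2 i))) = β ![x (σ 2), x (σ 3), x (σ 4)] :=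
    fun _ => congrArg β (FinVec.etaExpand_eq _).symm
  simp only [etaα, etaβ] at h
  simp only [show (4 : Fin 5) = Fin.succ 3 from rfl, show (3 : Fin 5) = Fin.succ 2 from rfl,
    show (2 : Fin 5) = Fin.succ 1 from rfl, show (1 : Fin 5) = Fin.succ 0 from rfl,
    show (3 : Fin 4) = Fin.succ 2 from rfl, show (2 : Fin 4) = Fin.succ 1 from rfl,
    show (1 : Fin 4) = Fin.succ 0 from rfl, show (2 : Fin 3) = Fin.succ 1 from rfl,
    show (1 : Fin 3) = Fin.succ 0 from rfl, show (1 : Fin 2) = Fin.succ 0 from rfl] at h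
  simp only [Finset.univ_perm_fin_succ, Finset.sum_map, Fintype.sum_prod_type,
    Fin.sum_univ_succ, Equiv.coe_toEmbedding, Equiv.Perm.decomposeFin.symm_sign,
    Equiv.Perm.decomposeFin_symm_apply_zero, Equiv.Perm.decomposeFin_symm_apply_succ,
    Finset.univ_unique, Finset.sum_singleton] at h
  simp (config := { decide := true }) only [Nat.factorial_two, Nat.reduceAdd, nsmul_eq_mul,
    Nat.cast_mul, Nat.cast_ofNat, ↓reduceIte, Equiv.Perm.default_eq, Equiv.Perm.sign_one, mul_one,
    Units.val_one, Fin.isValue, Equiv.swap_self, Fin.succ, Nat.zero_mod, zero_add, Fin.mk_one,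
    Equiv.refl_apply, Fin.coe_ofNat_eq_mod, Nat.one_mod, Fin.reduceFinMk, Nat.reduceMod,
    Equiv.Perm.coe_one, id_eq, Nat.mod_succ, one_smul, mul_neg, Units.val_neg,
    Int.reduceNeg, Fin.default_eq_zero, Equiv.swap_apply_right, neg_smul, Equiv.swap_apply_def,
    neg_neg] at h
  have sortα : ∀ i j : Fin 5, j < i → α ![x i, x j] = -α ![x j, x i] :=
    fun _ _ _ => α.map_fin_two_swap _ _
  have sortβ₀₁ : ∀ (i j : Fin 5) (y : V), j < i → β ![x i, x j, y] = -β ![x j, x i, y] :=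
    fun _ _ _ _ => β.map_fin_three_swap₀₁ _ _ _
  have sortβ₁₂ : ∀ (i j : Fin 5) (y : V), j < i → β ![y, x i, x j] = -β ![y, x j, x i] :=
    fun _ _ _ _ => β.map_fin_three_swap₁₂ _ _ _
  simp (disch := decide) only [sortα, sortβ₀₁, sortβ₁₂, neg_neg] at h
  linear_combination h / 12

theorem iota_wedge_of_iota_eq_zero (α : V [⋀^Fin 2]→ₗ[ℝ] ℝ) (β : V [⋀^Fin 3]→ₗ[ℝ] ℝ) {a : V}
    (ha : iota a α = 0) : iota a (wedge α β :) = wedge α (iota a β) := by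
  have ha' : ∀ y, α ![a, y] = 0 := fun y => congrArg (· ![y]) ha
  ext x
  simp only [iota, AlternatingMap.curryLeft_apply_apply, wedge_two_three_apply, wedge_two_two_apply]
  simp [ha']

theorem iota_iota_iota_same {n : ℕ} (θ : V [⋀^Fin (n + 3)]→ₗ[ℝ] ℝ) (a b : V) :
    iota a (iota b (iota a θ)) = 0 :=
  AlternatingMap.ext fun _ =>
    θ.map_eq_zero_of_eq _ (i := 0) (j := Fin.succ (Fin.succ 0)) rfl (Fin.succ_ne_zero _).symm

theorem wedge_self_eq_zero_of_iota_wedge_self_eq_zero (α : V [⋀^Fin 2]→ₗ[ℝ] ℝ) {b : V}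
    (hb : iota b α ≠ 0) (h : iota b (wedge α α :) = 0) : wedge α α = 0 := by
  obtain ⟨t₀, ht₀⟩ : ∃ t₀, α ![b, t₀] ≠ 0 := by
    by_contra! hcon
    exact hb (AlternatingMap.ext fun y => by rw [← FinVec.etaExpand_eq y]; exact hcon (y 0))
  have decomp : ∀ s t, α ![s, t] =
      (α ![b, s] * α ![t₀, t] - α ![b, t] * α ![t₀, s]) / α ![b, t₀] := by
    intro s t
    have hst := congrArg (· ![t₀, s, t]) h
    simp only [iota, AlternatingMap.curryLeft_apply_apply, wedge_two_two_apply, Fin.isValue,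
      Matrix.cons_val_zero, Matrix.cons_val_one, Matrix.cons_val, AlternatingMap.zero_apply] at hst
    field_simp
    linear_combination hst / 2
  ext x
  rw [wedge_two_two_apply, AlternatingMap.zero_apply, decomp (x 0) (x 1), decomp (x 0) (x 2),
    decomp (x 0) (x 3), decomp (x 1) (x 2), decomp (x 1) (x 3), decomp (x 2) (x 3)]
  ring

end Wedge

theorem wedge_iota_v_iota_Qv_eq_zero_general
    {V : Type*} [AddCommGroup V] [Module ℝ V]
    (ω : V [⋀^Fin 3]→ₗ[ℝ] ℝ) (hΔ : Delta ω = {0})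
    (θ : V [⋀^Fin 6]→ₗ[ℝ] ℝ)
    (Q : V →ₗ[ℝ] V) (hQ : ∀ v : V, wedge (iota v ω) ω = iota (Q v) θ) :
    ∀ v : V, wedge (iota v ω) (iota (Q v) ω) = 0 := by
  intro v
  have hvv : iota v (iota v ω) = 0 := AlternatingMap.curryLeft_same ω v
  have hQv : iota (Q v) (iota v ω) = 0 := by
    by_contra hne
    have hvΔ : v ∈ Delta ω := wedge_self_eq_zero_of_iota_wedge_self_eq_zero _ hne <| by
      rw [← iota_wedge_of_iota_eq_zero _ _ hvv, hQ, iota_iota_iota_same]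
    rw [hΔ, Set.mem_singleton_iff] at hvΔ
    subst hvΔ
    exact hne (by simp [iota])
  rw [← iota_wedge_of_iota_eq_zero _ _ hQv, hQ]
  exact AlternatingMap.curryLeft_same θ (Q v)

/-- **Lemma 5.** If `Δ(ω) = {0}`, then for every `v` one has `(ι_v ω) ∧ (ι_{Q v} ω) = 0`. -/
theorem wedge_iota_v_iota_Qv_eq_zero
    {V : Type*} [AddCommGroup V] [Module ℝ V] [FiniteDimensional ℝ V]
    (hV : Module.finrank ℝ V = 6)
    (ω : V [⋀^Fin 3]→ₗ[ℝ] ℝ) (hΔ : Delta ω = {0})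
    (θ : V [⋀^Fin 6]→ₗ[ℝ] ℝ) (hθ : θ ≠ 0)
    (Q : V →ₗ[ℝ] V) (hQ : ∀ v : V, wedge (iota v ω) ω = iota (Q v) θ) :
    ∀ v : V, wedge (iota v ω) (iota (Q v) ω) = 0 :=
  wedge_iota_v_iota_Qv_eq_zero_general ω hΔ θ Q hQ
end

section
/- Let V be a 6-dimensional real vector space, ω an alternating 3-form on V with Δ(ω) = {0}, and J a complex structure on V such that ω is pure with respect to J. Regard V as a 3-dimensional complex vector space with scalar multiplication determined by i·v = Jv. Then there exists a unique complex alternating 3-form γ on this complex vector space (ℂ-trilinear and alternating) such that Re(γ(v₁,v₂,v₃)) = ω(v₁,v₂,v₃) for all v₁,v₂,v₃ ∈ V. -/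
open scoped TensorProduct

/-- **Proposition 8.** Let `ω` be a 3-form on a 6-dimensional real vector space `V` with
`Δ(ω) = {0}` and let `J` be a complex structure with respect to which `ω` is pure. Viewing
`V` as a 3-dimensional complex vector space via `i • v = J v`, there is a unique complex
alternating 3-form `γ` (here: a real alternating 3-form with values in `ℂ` that is
`J`-complex-linear in each argument) such that `ω = Re ∘ γ`. -/
theorem exists_unique_complex_three_form
    {V : Type*} [AddCommGroup V] [Module ℝ V] [FiniteDimensional ℝ V]
    (hV : Module.finrank ℝ V = 6)
    (ω : V [⋀^Fin 3]→ₗ[ℝ] ℝ) (hΔ : Delta ω = {0})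
    (J : V →ₗ[ℝ] V) (hJ : J ∘ₗ J = -LinearMap.id)
    (hpure : ∀ v₁ v₂ v₃ : V,
      ω ![J v₁, v₂, v₃] = ω ![v₁, J v₂, v₃] ∧ ω ![v₁, J v₂, v₃] = ω ![v₁, v₂, J v₃]) :
    ∃! γ : V [⋀^Fin 3]→ₗ[ℝ] ℂ,
      (∀ v₁ v₂ v₃ : V,
        γ ![J v₁, v₂, v₃] = Complex.I * γ ![v₁, v₂, v₃] ∧
        γ ![v₁, J v₂, v₃] = Complex.I * γ ![v₁, v₂, v₃] ∧
        γ ![v₁, v₂, J v₃] = Complex.I * γ ![v₁, v₂, v₃]) ∧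
      (∀ v₁ v₂ v₃ : V, (γ ![v₁, v₂, v₃]).re = ω ![v₁, v₂, v₃]) := by
  have hJJ : ∀ v : V, J (J v) = -v := fun v => by
    have h := LinearMap.congr_fun hJ v; simpa using h
  have hneg1 : ∀ v₁ v₂ v₃ : V, ω ![-v₁, v₂, v₃] = -ω ![v₁, v₂, v₃] := by
    intro v₁ v₂ v₃
    have h : ![-v₁, v₂, v₃] = Function.update ![v₁, v₂, v₃] 0 (-v₁) := by
      funext i; fin_cases i <;> simp
    have h2 : Function.update ![v₁, v₂, v₃] 0 v₁ = ![v₁, v₂, v₃] := by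
      funext j; fin_cases j <;> simp
    rw [h, ω.map_update_neg, h2]
  have hneg2 : ∀ v₁ v₂ v₃ : V, ω ![v₁, -v₂, v₃] = -ω ![v₁, v₂, v₃] := by
    intro v₁ v₂ v₃
    have h : ![v₁, -v₂, v₃] = Function.update ![v₁, v₂, v₃] 1 (-v₂) := by
      funext i; fin_cases i <;> simp
    have h2 : Function.update ![v₁, v₂, v₃] 1 v₂ = ![v₁, v₂, v₃] := by
      funext j; fin_cases j <;> simp
    rw [h, ω.map_update_neg, h2]
  have hneg3 : ∀ v₁ v₂ v₃ : V, ω ![v₁, v₂, -v₃] = -ω ![v₁, v₂, v₃] := by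
    intro v₁ v₂ v₃
    have h : ![v₁, v₂, -v₃] = Function.update ![v₁, v₂, v₃] 2 (-v₃) := by
      funext i; fin_cases i <;> simp
    have h2 : Function.update ![v₁, v₂, v₃] 2 v₃ = ![v₁, v₂, v₃] := by
      funext j; fin_cases j <;> simp
    rw [h, ω.map_update_neg, h2]
  have hJJ12 : ∀ v₁ v₂ v₃ : V, ω ![J v₁, J v₂, v₃] = -ω ![v₁, v₂, v₃] := by
    intro v₁ v₂ v₃
    rw [(hpure v₁ (J v₂) v₃).1, hJJ, hneg2]
  have hJJ13 : ∀ v₁ v₂ v₃ : V, ω ![J v₁, v₂, J v₃] = -ω ![v₁, v₂, v₃] := by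
    intro v₁ v₂ v₃
    rw [(hpure v₁ v₂ (J v₃)).1, (hpure v₁ v₂ (J v₃)).2, hJJ, hneg3]
  have hJJ23 : ∀ v₁ v₂ v₃ : V, ω ![v₁, J v₂, J v₃] = -ω ![v₁, v₂, v₃] := by
    intro v₁ v₂ v₃
    rw [(hpure v₁ v₂ (J v₃)).2, hJJ, hneg3]
  have hJ3 : ∀ v₁ v₂ v₃ : V, ω ![J v₁, J v₂, J v₃] = -ω ![J v₁, v₂, v₃] := by
    intro v₁ v₂ v₃
    rw [(hpure v₁ (J v₂) (J v₃)).1, hJJ, hneg2, (hpure v₁ v₂ v₃).1, (hpure v₁ v₂ v₃).2]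
  set γ : V [⋀^Fin 3]→ₗ[ℝ] ℂ :=
    (Algebra.linearMap ℝ ℂ).compAlternatingMap ω
      + Complex.I • (Algebra.linearMap ℝ ℂ).compAlternatingMap (ω.compLinearMap J) with hγdef
  have hcomp : ∀ v₁ v₂ v₃ : V, (fun i => J (![v₁, v₂, v₃] i)) = ![J v₁, J v₂, J v₃] := by
    intro v₁ v₂ v₃; funext i; fin_cases i <;> simp
  have hγeval : ∀ v₁ v₂ v₃ : V,
      γ ![v₁, v₂, v₃]
        = (ω ![v₁, v₂, v₃] : ℂ) + Complex.I * (ω ![J v₁, J v₂, J v₃] : ℂ) := by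
    intro v₁ v₂ v₃
    show (Algebra.linearMap ℝ ℂ) (ω ![v₁, v₂, v₃])
        + Complex.I • (Algebra.linearMap ℝ ℂ) (ω (fun i => J (![v₁, v₂, v₃] i))) = _
    rw [hcomp]
    simp [Algebra.linearMap_apply, smul_eq_mul]
  have key : ∀ x y : ℝ, (x : ℂ) + Complex.I * (y : ℂ)
      = Complex.I * ((y : ℂ) + Complex.I * (-(x : ℂ))) := by
    intro x y
    simp [Complex.ext_iff]
  refine ⟨γ, ⟨?_, ?_⟩, ?_⟩
  · intro v₁ v₂ v₃
    have e0 := hγeval v₁ v₂ v₃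
    have e1 := hγeval (J v₁) v₂ v₃
    have e2 := hγeval v₁ (J v₂) v₃
    have e3 := hγeval v₁ v₂ (J v₃)
    rw [hJJ] at e1 e2 e3
    refine ⟨?_, ?_, ?_⟩
    · rw [e1, e0, hneg1, hJJ23, hJ3]
      push_cast
      rw [neg_neg]
      exact key _ _
    · rw [e2, e0, hneg2, hJJ13, hJ3, ← (hpure v₁ v₂ v₃).1]
      push_cast
      rw [neg_neg]
      exact key _ _
    · rw [e3, e0, hneg3, hJJ12, hJ3, ← (hpure v₁ v₂ v₃).2, ← (hpure v₁ v₂ v₃).1]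
      push_cast
      rw [neg_neg]
      exact key _ _
  · intro v₁ v₂ v₃
    rw [hγeval]
    simp
  · intro γ' ⟨h1, h2⟩
    ext m
    have hm : m = ![m 0, m 1, m 2] := by
      funext i; fin_cases i <;> simp
    rw [hm]
    set a := m 0; set b := m 1; set c := m 2
    have him : (γ' ![a, b, c]).im = -ω ![J a, b, c] := by
      have h := congrArg Complex.re (h1 a b c).1
      rw [Complex.mul_re, Complex.I_re, Complex.I_im] at h
      rw [h2 (J a) b c] at h
      linarith
    apply Complex.ext
    · rw [h2 a b c, hγeval]; simp
    · rw [him, hγeval, hJ3]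
      simp
end

section
/- Let V be a 6-dimensional real vector space, ω an alternating 3-form on V with Δ(ω) = {0}, and J a complex structure on V such that ω is pure with respect to J. If A : V → V is a linear map such that ω(Av₁,v₂,v₃) = ω(v₁,Av₂,v₃) = ω(v₁,v₂,Av₃) for all v₁,v₂,v₃ ∈ V, then A = λ₀·id_V + λ₁·J for some real numbers λ₀, λ₁; if in addition A∘J + J∘A = 0, then A = 0. -/
open scoped TensorProduct

/-! If `A v` left the line `span {v, J v}` for some `v ≠ 0`, then `v`, `J v` and `A v` would span a
3-dimensional subspace of the kernel of `ι_v ω` (each `T ∈ {id, J, A}` gives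
`ω(v, T v, ·) = ω(T v, v, ·) = -ω(v, T v, ·)`). In dimension 6 every 4 vectors then meet that
kernel, so `ι_v ω ∧ ι_v ω = 0`, contradicting `Δ(ω) = {0}`. Thus `A` preserves every
`J`-complex line; comparing `A u`, `A v` and `A (u + v)` for `u`, `v` on different lines shows that
`A` acts on all of them by one scalar `λ₀ + λ₁ J`. Finally `A J + J A = 2 λ₀ J - 2 λ₁`, which
vanishes only for `λ₀ = λ₁ = 0`. -/

namespace AlternatingMap

section CommRing

variable {R M N : Type*} [CommRing R] [AddCommGroup M] [Module R M] [AddCommGroup N] [Module R N]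

theorem map_eq_zero_of_curryLeft_eq_zero {n : ℕ} (f : M [⋀^Fin (n + 1)]→ₗ[R] N) {u : M}
    (hu : f.curryLeft u = 0) {x : Fin (n + 1) → M} {i : Fin (n + 1)} (hx : x i = u) :
    f x = 0 := by
  have hswap : f (x ∘ Equiv.swap 0 i) = 0 := by
    rw [← Fin.cons_self_tail (x ∘ Equiv.swap 0 i), Function.comp_apply, Equiv.swap_apply_left, hx]
    exact AlternatingMap.congr_fun hu _
  rcases eq_or_ne i 0 with rfl | hi
  · simpa using hswap
  · rwa [map_swap _ _ hi.symm, neg_eq_zero] at hswap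

theorem domCoprod_apply_eq_zero_of_apply_eq {ιa ιb : Type*} [Fintype ιa] [Fintype ιb]
    [DecidableEq ιa] [DecidableEq ιb] {N₁ N₂ : Type*} [AddCommGroup N₁] [Module R N₁]
    [AddCommGroup N₂] [Module R N₂] (a : M [⋀^ιa]→ₗ[R] N₁) (b : M [⋀^ιb]→ₗ[R] N₂) {u : M}
    (ha : ∀ (x : ιa → M) i, x i = u → a x = 0) (hb : ∀ (x : ιb → M) i, x i = u → b x = 0)
    {x : ιa ⊕ ιb → M} {s : ιa ⊕ ιb} (hx : x s = u) : a.domCoprod b x = 0 := by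
  rw [domCoprod_apply, sum_apply]
  refine Finset.sum_eq_zero fun σ _ => ?_
  induction σ using Quotient.inductionOn' with | h σ
  rw [domCoprod.summand_mk'', _root_.smul_apply, MultilinearMap.domDomCongr_apply,
    MultilinearMap.domCoprod_apply]
  simp only [coe_multilinearMap]
  have hσ : x (σ (σ.symm s)) = u := by rw [Equiv.apply_symm_apply, hx]
  rcases hs : σ.symm s with i | i <;> rw [hs] at hσ
  · rw [ha _ i hσ, TensorProduct.zero_tmul, smul_zero]
  · rw [hb _ i hσ, TensorProduct.tmul_zero, smul_zero]

end CommRing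

theorem eq_zero_of_finrank_lt {K M N ι : Type*} [Field K] [AddCommGroup M] [Module K M]
    [AddCommGroup N] [Module K N] [Fintype ι] [FiniteDimensional K M]
    (f : M [⋀^ι]→ₗ[K] N) (W : Submodule K M) (hf : ∀ (x : ι → M) i, x i ∈ W → f x = 0)
    (hW : Module.finrank K M < Module.finrank K W + Fintype.card ι) : f = 0 := by
  classical
  ext x
  rw [zero_apply]
  by_cases hx : LinearIndependent K x
  swap
  · exact f.map_linearDependent x hx
  have hspan : Module.finrank K (Submodule.span K (Set.range x)) = Fintype.card ι :=
    finrank_span_eq_card hx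
  obtain ⟨u, hu, huW, hu0⟩ : ∃ u ∈ Submodule.span K (Set.range x), u ∈ W ∧ u ≠ 0 := by
    by_contra! h
    have := Submodule.finrank_add_finrank_le_of_disjoint (Submodule.disjoint_def.mpr h)
    omega
  obtain ⟨c, rfl⟩ := (Submodule.mem_span_range_iff_exists_fun K).mp hu
  obtain ⟨j, hj⟩ : ∃ j, c j ≠ 0 := by
    by_contra! h
    simp [h] at hu0
  have hupdate : f (Function.update x j (∑ i, c i • x i)) = c j • f x := by
    rw [f.map_update_sum, Finset.sum_eq_single j]
    · rw [f.map_update_smul, Function.update_eq_self]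
    · intro i _ hij
      rw [f.map_update_smul, f.map_update_self _ hij.symm, smul_zero]
    · simp
  have hzero := hf (Function.update x j (∑ i, c i • x i)) j (by rwa [Function.update_self])
  rw [hupdate, smul_eq_zero] at hzero
  exact hzero.resolve_left hj

end AlternatingMap

open Submodule

section ComplexStructure

variable {V : Type*} [AddCommGroup V] [Module ℝ V] {J : V →ₗ[ℝ] V}

def complexLine (J : V →ₗ[ℝ] V) (v : V) : Submodule ℝ V :=
  span ℝ {v, J v}

theorem mem_complexLine {v x : V} : x ∈ complexLine J v ↔ ∃ a b : ℝ, a • v + b • J v = x :=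
  mem_span_pair

theorem self_mem_complexLine (v : V) : v ∈ complexLine J v :=
  subset_span (Set.mem_insert _ _)

variable (hJ : ∀ v, J (J v) = -v)
include hJ

theorem apply_mem_complexLine_of_mem {v x : V} (hx : x ∈ complexLine J v) :
    J x ∈ complexLine J v := by
  obtain ⟨a, b, rfl⟩ := mem_complexLine.mp hx
  refine mem_complexLine.mpr ⟨-b, a, ?_⟩
  simp only [map_add, map_smul, hJ]
  module

-- `a - b J` inverts `a + b J` up to the factor `a² + b²`.
theorem mem_of_smul_add_smul_apply_mem {W : Submodule ℝ V} (hW : ∀ x ∈ W, J x ∈ W) {a b : ℝ}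
    (hab : a ≠ 0 ∨ b ≠ 0) {x : V} (hx : a • x + b • J x ∈ W) : x ∈ W := by
  have hnorm : a ^ 2 + b ^ 2 ≠ 0 := by rcases hab with h | h <;> positivity
  have hinv : (a ^ 2 + b ^ 2) • x = a • (a • x + b • J x) - b • J (a • x + b • J x) := by
    simp only [map_add, map_smul, hJ]
    module
  rw [← W.smul_mem_iff hnorm, hinv]
  exact W.sub_mem (W.smul_mem a hx) (W.smul_mem b (hW _ hx))

theorem linearIndependent_self_apply {v : V} (hv : v ≠ 0) : LinearIndependent ℝ ![v, J v] := by
  refine LinearIndependent.pair_iff.mpr fun a b hab => ?_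
  by_contra! h
  refine hv (mem_bot ℝ |>.mp <| mem_of_smul_add_smul_apply_mem hJ ?_ ?_ (hab ▸ zero_mem ⊥))
  · simp
  · tauto

theorem mem_complexLine_comm {u v : V} (hv : v ≠ 0) (h : v ∈ complexLine J u) :
    u ∈ complexLine J v := by
  obtain ⟨a, b, rfl⟩ := mem_complexLine.mp h
  refine mem_of_smul_add_smul_apply_mem hJ (fun x => apply_mem_complexLine_of_mem hJ) ?_
    (self_mem_complexLine _)
  by_contra! hab
  simp [hab] at hv

theorem complexLine_le {v x : V} (hx : x ∈ complexLine J v) :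
    complexLine J x ≤ complexLine J v :=
  span_le.mpr <| Set.insert_subset hx <| Set.singleton_subset_iff.mpr <|
    apply_mem_complexLine_of_mem hJ hx

variable {A : V →ₗ[ℝ] V} (hA : ∀ v, A v ∈ complexLine J v)
include hA

-- Compare the coefficients of `A u`, `A v` and `A (u + v)` in the basis `u, J u, v, J v`.
theorem apply_eq_of_not_mem_complexLine {u v : V} (hu : u ≠ 0) (hv : v ∉ complexLine J u)
    {a b : ℝ} (hAu : A u = a • u + b • J u) : A v = a • v + b • J v := by
  obtain ⟨c, d, hcd⟩ := mem_complexLine.mp (hA v)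
  obtain ⟨e, f, hef⟩ := mem_complexLine.mp (hA (u + v))
  have hsum : (a - e) • u + (b - f) • J u + ((c - e) • v + (d - f) • J v) = 0 := by
    rw [map_add, map_add, hAu, ← hcd] at hef
    linear_combination (norm := module) -hef
  have hv' : c - e = 0 ∧ d - f = 0 := by
    by_contra h
    refine hv (mem_of_smul_add_smul_apply_mem hJ (fun x => apply_mem_complexLine_of_mem hJ)
      (not_and_or.mp h) ?_)
    rw [eq_neg_of_add_eq_zero_right hsum]
    exact neg_mem (add_mem (smul_mem _ _ (self_mem_complexLine u))
      (smul_mem _ _ (apply_mem_complexLine_of_mem hJ (self_mem_complexLine u))))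
  have hu' := LinearIndependent.pair_iff.mp (linearIndependent_self_apply hJ hu) (a - e) (b - f)
    (by simpa [hv'.1, hv'.2] using hsum)
  rw [← hcd, sub_eq_zero.mp hv'.1, sub_eq_zero.mp hv'.2, sub_eq_zero.mp hu'.1,
    sub_eq_zero.mp hu'.2]

theorem exists_eq_smul_id_add_smul_of_forall_mem_complexLine
    (hV : 2 < Module.finrank ℝ V) : ∃ a b : ℝ, A = a • LinearMap.id + b • J := by
  have : Nontrivial V := Module.nontrivial_of_finrank_pos (R := ℝ) (by omega)
  obtain ⟨v₀, hv₀⟩ := exists_ne (0 : V)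
  obtain ⟨w, hw⟩ : ∃ w, w ∉ complexLine J v₀ := by
    by_contra! h
    have hle := finrank_range_le_card (R := ℝ) ![v₀, J v₀]
    rw [Matrix.range_cons_cons_empty] at hle
    change Module.finrank ℝ (complexLine J v₀) ≤ _ at hle
    rw [eq_top_iff'.mpr h, finrank_top, Fintype.card_fin] at hle
    omega
  have hw₀ : w ≠ 0 := fun h => hw (h ▸ zero_mem _)
  obtain ⟨a, b, hab⟩ := mem_complexLine.mp (hA v₀)
  have hAw := apply_eq_of_not_mem_complexLine hJ hA hv₀ hw hab.symm
  refine ⟨a, b, LinearMap.ext fun v => ?_⟩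
  rcases eq_or_ne v 0 with rfl | hv
  · simp
  by_cases hvv₀ : v ∈ complexLine J v₀
  · have hvw : v ∉ complexLine J w := fun hvw =>
      hw (complexLine_le hJ hvv₀ (mem_complexLine_comm hJ hv hvw))
    exact apply_eq_of_not_mem_complexLine hJ hA hw₀ hvw hAw
  · exact apply_eq_of_not_mem_complexLine hJ hA hv₀ hvv₀ hab.symm

end ComplexStructure

section Forms

variable {V : Type*} [AddCommGroup V] [Module ℝ V]

theorem wedge_apply_eq_zero_of_mem_ker {p q : ℕ} (α : V [⋀^Fin (p + 1)]→ₗ[ℝ] ℝ)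
    (β : V [⋀^Fin (q + 1)]→ₗ[ℝ] ℝ) {x : Fin (p + 1 + (q + 1)) → V} {j : Fin (p + 1 + (q + 1))}
    (hα : x j ∈ LinearMap.ker α.curryLeft) (hβ : x j ∈ LinearMap.ker β.curryLeft) :
    wedge α β x = 0 := by
  show LinearMap.mul' ℝ ℝ (α.domCoprod β (x ∘ finSumFinEquiv)) = 0
  rw [AlternatingMap.domCoprod_apply_eq_zero_of_apply_eq α β
    (fun _ _ => α.map_eq_zero_of_curryLeft_eq_zero hα)
    (fun _ _ => β.map_eq_zero_of_curryLeft_eq_zero hβ) (s := finSumFinEquiv.symm j) (by simp),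
    map_zero]

theorem wedge_self_eq_zero_of_finrank_lt [FiniteDimensional ℝ V] {p : ℕ}
    (β : V [⋀^Fin (p + 1)]→ₗ[ℝ] ℝ)
    (h : Module.finrank ℝ V < Module.finrank ℝ (LinearMap.ker β.curryLeft) + 2 * (p + 1)) :
    wedge β β = 0 :=
  AlternatingMap.eq_zero_of_finrank_lt _ _
    (fun _ _ hx => wedge_apply_eq_zero_of_mem_ker β β hx hx)
    (by simp only [Fintype.card_fin]; omega)

theorem apply_mem_ker_curryLeft_iota (ω : V [⋀^Fin 3]→ₗ[ℝ] ℝ) {T : V →ₗ[ℝ] V}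
    (hT : ∀ v₁ v₂ v₃, ω ![T v₁, v₂, v₃] = ω ![v₁, T v₂, v₃]) (v : V) :
    T v ∈ LinearMap.ker (iota v ω).curryLeft := by
  refine LinearMap.mem_ker.mpr <| AlternatingMap.ext fun w => ?_
  have hw : Matrix.vecCons v (Matrix.vecCons (T v) w) = ![v, T v, w 0] := by
    ext i; fin_cases i <;> rfl
  have hswap : ω ![T v, v, w 0] = -ω ![v, T v, w 0] := by
    convert ω.map_swap ![v, T v, w 0] (i := 0) (j := 1) (by decide) using 2
    ext i; fin_cases i <;> rfl
  show ω (Matrix.vecCons v (Matrix.vecCons (T v) w)) = 0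
  rw [hw]
  linarith [hT v v (w 0)]

theorem apply_mem_complexLine_of_Delta_eq [FiniteDimensional ℝ V]
    (hV : Module.finrank ℝ V ≤ 6) {ω : V [⋀^Fin 3]→ₗ[ℝ] ℝ} (hΔ : Delta ω = {0})
    {J : V →ₗ[ℝ] V} (hJ : ∀ v, J (J v) = -v)
    (hJω : ∀ v₁ v₂ v₃, ω ![J v₁, v₂, v₃] = ω ![v₁, J v₂, v₃]) {A : V →ₗ[ℝ] V}
    (hA : ∀ v₁ v₂ v₃, ω ![A v₁, v₂, v₃] = ω ![v₁, A v₂, v₃]) (v : V) :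
    A v ∈ complexLine J v := by
  rcases eq_or_ne v 0 with rfl | hv
  · simp
  by_contra hAv
  have hindep : LinearIndependent ℝ ![A v, v, J v] := by
    refine (linearIndependent_self_apply hJ hv).finCons ?_
    rwa [Matrix.range_cons_cons_empty]
  have hker : Submodule.span ℝ (Set.range ![A v, v, J v]) ≤
      LinearMap.ker (iota v ω).curryLeft := by
    rw [Submodule.span_le, Set.range_subset_iff]
    intro i
    fin_cases i
    · exact apply_mem_ker_curryLeft_iota ω hA v
    · exact apply_mem_ker_curryLeft_iota ω (T := LinearMap.id) (fun _ _ _ => rfl) v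
    · exact apply_mem_ker_curryLeft_iota ω hJω v
  have hrank := Submodule.finrank_mono hker
  rw [finrank_span_eq_card hindep, Fintype.card_fin] at hrank
  have hvΔ : v ∈ Delta ω := wedge_self_eq_zero_of_finrank_lt (iota v ω) (by omega)
  rw [hΔ] at hvΔ
  exact hv hvΔ

end Forms

/-- If `ω` is a 3-form on a 6-dimensional real vector space with `Δ(ω) = {0}`, `J` a complex
structure making `ω` pure, and `A` a linear map with
`ω(Av₁,v₂,v₃) = ω(v₁,Av₂,v₃) = ω(v₁,v₂,Av₃)`, then `A = λ₀•id + λ₁•J` for some reals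
`λ₀, λ₁`; if moreover `A∘J + J∘A = 0`, then `A = 0`. -/
theorem pure_endomorphism_eq_combination
    {V : Type*} [AddCommGroup V] [Module ℝ V] [FiniteDimensional ℝ V]
    (hV : Module.finrank ℝ V = 6)
    (ω : V [⋀^Fin 3]→ₗ[ℝ] ℝ) (hΔ : Delta ω = {0})
    (J : V →ₗ[ℝ] V) (hJ : J ∘ₗ J = -LinearMap.id)
    (hpure : ∀ v₁ v₂ v₃ : V,
      ω ![J v₁, v₂, v₃] = ω ![v₁, J v₂, v₃] ∧ ω ![v₁, J v₂, v₃] = ω ![v₁, v₂, J v₃])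
    (A : V →ₗ[ℝ] V)
    (hA : ∀ v₁ v₂ v₃ : V,
      ω ![A v₁, v₂, v₃] = ω ![v₁, A v₂, v₃] ∧ ω ![v₁, A v₂, v₃] = ω ![v₁, v₂, A v₃]) :
    (∃ l₀ l₁ : ℝ, A = l₀ • LinearMap.id + l₁ • J) ∧
      (A ∘ₗ J + J ∘ₗ A = 0 → A = 0) := by
  have hJJ : ∀ v, J (J v) = -v := fun v => LinearMap.congr_fun hJ v
  obtain ⟨l₀, l₁, rfl⟩ := exists_eq_smul_id_add_smul_of_forall_mem_complexLine hJJ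
    (apply_mem_complexLine_of_Delta_eq hV.le hΔ hJJ (fun _ _ _ => (hpure _ _ _).1)
      (fun _ _ _ => (hA _ _ _).1)) (by omega)
  refine ⟨⟨l₀, l₁, rfl⟩, fun hanti => ?_⟩
  have : Nontrivial V := Module.nontrivial_of_finrank_pos (R := ℝ) (by omega)
  obtain ⟨v, hv⟩ := exists_ne (0 : V)
  have hanti_v : (-(2 * l₁)) • v + (2 * l₀) • J v = 0 := by
    have := LinearMap.congr_fun hanti v
    simp only [LinearMap.add_apply, LinearMap.comp_apply, LinearMap.smul_apply,
      LinearMap.id_apply, map_add, map_smul, hJJ, LinearMap.zero_apply] at this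
    linear_combination (norm := module) this
  obtain ⟨h₁, h₀⟩ := LinearIndependent.pair_iff.mp (linearIndependent_self_apply hJJ hv) _ _
    hanti_v
  obtain ⟨rfl, rfl⟩ : l₀ = 0 ∧ l₁ = 0 := ⟨by linarith, by linarith⟩
  simp
end
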